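/- arXiv:2309.08834 — 8 statements merged into one kernel-verified Lean document; each statement's English description precedes it below -/
import Mathlib

section
/- Let M ≥ 1. The number of functions f : {1,…,M} → {1,…,M} whose functional graph is connected equals (M−1)! · Σ_{m=0}^{M−1} M^m/m!. Equivalently, the probability that a classical random map consists of a single community is P(1,M) = (M−1)!/M^M · Σ_{m=0}^{M−1} M^m/m!. -/
/-!
The periodic points `Z` of a map `f` on a finite set are exactly the points lying on cycles, and
every point reaches `Z`. Hence `f` is the same as a bijection of `Z` together with a rooted forest
whose roots are the points of `Z`, and the functional graph of `f` is connected exactly when that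
bijection is a single cycle. There are `(k - 1)!` cyclic permutations of a `k`-set, and
`k n ^ (n - k - 1)` rooted forests on `n` points with a prescribed set of `k` roots: deleting the
roots leaves a forest on `n - k` points rooted at the former children of the roots, so the forest
count satisfies a recursion solved by the differentiated binomial theorem
`∑ j, j (m choose j) x ^ j y ^ (m - j) = m x (x + y) ^ (m - 1)`. Summing over `Z` gives
`∑ k, (n choose k) (k - 1)! k n ^ (n - k - 1) = (n - 1)! ∑_{m < n} n ^ m / m!`.
-/

open Function Finset
open scoped Nat

namespace Function

variable {α : Type*} {f g : α → α} {s : Set α} {x : α}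

theorem induction_of_exists_iterate_mem {P : α → Prop} (hs : ∀ x ∈ s, P x)
    (hf : ∀ x ∉ s, P (f x) → P x) (hx : ∃ n, f^[n] x ∈ s) : P x := by
  obtain ⟨n, hn⟩ := hx
  induction n generalizing x with
  | zero => exact hs x hn
  | succ n ih =>
    by_cases hxs : x ∈ s
    · exact hs x hxs
    · exact hf x hxs (ih hn)

theorem exists_iterate_mem_of_eqOn_compl (h : Set.EqOn f g sᶜ) (hx : ∃ n, f^[n] x ∈ s) :
    ∃ n, g^[n] x ∈ s :=
  induction_of_exists_iterate_mem (P := fun x => ∃ n, g^[n] x ∈ s) (fun _ hx => ⟨0, hx⟩)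
    (fun _ hx ⟨n, hn⟩ => ⟨n + 1, by rwa [iterate_succ_apply, ← h hx]⟩) hx

theorem exists_iterate_mem_periodicPts [Finite α] (f : α → α) (x : α) :
    ∃ n, f^[n] x ∈ periodicPts f := by
  obtain ⟨i, j, hij, hne⟩ : ∃ i j, f^[i] x = f^[j] x ∧ i ≠ j := by
    simpa [Injective] using not_injective_infinite_finite (f^[·] x)
  rcases hne.lt_or_gt with hlt | hlt
  · refine ⟨i, mk_mem_periodicPts (n := j - i) (by omega) ?_⟩
    rw [IsPeriodicPt, IsFixedPt, ← iterate_add_apply, Nat.sub_add_cancel hlt.le, hij]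
  · refine ⟨j, mk_mem_periodicPts (n := i - j) (by omega) ?_⟩
    rw [IsPeriodicPt, IsFixedPt, ← iterate_add_apply, Nat.sub_add_cancel hlt.le, hij]

theorem exists_iterate_iterate_eq_of_mem_periodicPts (hx : x ∈ periodicPts f) (n : ℕ) :
    ∃ m, f^[m] (f^[n] x) = x := by
  obtain ⟨p, hp, hpx⟩ := mem_periodicPts.1 hx
  refine ⟨p * n - n, ?_⟩
  rw [← iterate_add_apply, Nat.sub_add_cancel (Nat.le_mul_of_pos_left n hp)]
  exact (hpx.mul_const n).eq

theorem periodicPts_subset_of_mapsTo (hs : Set.MapsTo f s s) (h : ∀ x, ∃ n, f^[n] x ∈ s) :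
    periodicPts f ⊆ s := by
  intro x hx
  obtain ⟨n, hn⟩ := h x
  obtain ⟨m, hm⟩ := exists_iterate_iterate_eq_of_mem_periodicPts hx n
  exact hm ▸ hs.iterate m hn

theorem mapsTo_of_periodicPts_eq (hs : periodicPts f = s) : Set.MapsTo f s s :=
  hs ▸ (bijOn_periodicPts f).mapsTo

end Function

theorem Nat.card_subtype_eq_sum_card_fiberwise {β ι : Type*} [Fintype ι] [Finite β]
    (p : β → Prop) (key : β → ι) :
    Nat.card {b // p b} = ∑ i, Nat.card {b // p b ∧ key b = i} := by
  rw [Nat.card_congr (Equiv.sigmaFiberEquiv fun b : {b // p b} => key b).symm, Nat.card_sigma]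
  exact sum_congr rfl fun i _ =>
    Nat.card_congr (Equiv.subtypeSubtypeEquivSubtypeInter p (key · = i))

theorem sum_range_pow_mul_pow_mul_choose_mul {R : Type*} [CommSemiring R] (x y : R) (m : ℕ) :
    ∑ j ∈ range (m + 1), x ^ j * y ^ (m - j) * (m.choose j * j : ℕ) =
      m * x * (x + y) ^ (m - 1) := by
  cases m with
  | zero => simp
  | succ n =>
    rw [sum_range_succ', add_pow, mul_sum]
    simp only [Nat.cast_zero, mul_zero, add_zero, Nat.add_sub_cancel]
    refine sum_congr rfl fun j _ => ?_
    rw [← Nat.add_one_mul_choose_eq, Nat.succ_sub_succ]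
    push_cast
    ring

section CyclicMaps

open Equiv.Perm Fintype in
theorem isCycleOn_univ_iff_cycleType {β : Type*} [Fintype β] [DecidableEq β]
    (hβ : 1 < card β) {g : Equiv.Perm β} : g.IsCycleOn Set.univ ↔ g.cycleType = {card β} := by
  have hnt : (Set.univ : Set β).Nontrivial :=
    Set.nontrivial_univ_iff.2 (one_lt_card_iff_nontrivial.1 hβ)
  constructor
  · intro hg
    have hsupp : g.support = univ :=
      eq_univ_of_forall fun a => mem_support.2 (hg.apply_ne hnt (Set.mem_univ a))
    rw [(isCycle_iff_exists_isCycleOn.2 ⟨_, hnt, hg, fun x _ => Set.mem_univ x⟩).cycleType,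
      hsupp, card_univ]
  · intro hg
    have hcyc : g.IsCycle := card_cycleType_eq_one.1 (by simp [hg])
    have hsupp : g.support = univ :=
      eq_univ_of_card _ (by rw [← sum_cycleType, hg, Multiset.sum_singleton])
    convert hcyc.isCycleOn
    ext x
    simpa [hsupp] using Equiv.Perm.mem_support (f := g) (x := x)

open Fintype in
theorem card_perm_isCycleOn_univ (β : Type*) [Finite β] :
    Nat.card {g : Equiv.Perm β // g.IsCycleOn Set.univ} = (Nat.card β - 1)! := by
  classical
  cases nonempty_fintype β
  rcases le_or_gt (card β) 1 with hβ | hβ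
  · have : Subsingleton β := card_le_one_iff_subsingleton.1 hβ
    rw [Nat.card_eq_fintype_card (α := β), Nat.sub_eq_zero_of_le hβ, Nat.factorial_zero,
      Nat.card_eq_one_iff_unique]
    exact ⟨⟨fun _ _ => Subtype.ext (Subsingleton.elim _ _)⟩,
      ⟨⟨1, Equiv.Perm.isCycleOn_of_subsingleton _ _⟩⟩⟩
  · rw [Nat.card_eq_fintype_card, Fintype.card_subtype, Nat.card_eq_fintype_card]
    simp_rw [isCycleOn_univ_iff_cycleType hβ]
    rw [Equiv.Perm.card_of_cycleType_singleton hβ le_rfl, Nat.choose_self, mul_one]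

variable {β : Type*}

def IsCyclicMap (σ : β → β) : Prop := ∀ a b, ∃ n, σ^[n] a = b

theorem IsCyclicMap.bijective [Finite β] {σ : β → β} (hσ : IsCyclicMap σ) : Bijective σ := by
  refine Finite.surjective_iff_bijective.1 fun b => ?_
  obtain ⟨n, hn⟩ := hσ (σ b) b
  exact ⟨σ^[n] b, by rwa [← iterate_succ_apply' σ, iterate_succ_apply]⟩

variable (β) in
noncomputable def cyclicMapEquivPerm [Finite β] :
    {σ : β → β // IsCyclicMap σ} ≃ {g : Equiv.Perm β // g.IsCycleOn Set.univ} where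
  toFun σ := ⟨Equiv.ofBijective σ.1 σ.2.bijective,
    ⟨(Equiv.bijective _).bijOn_univ, fun a _ b _ => by
      obtain ⟨n, hn⟩ := σ.2 a b
      exact ⟨n, by simpa [← Equiv.Perm.iterate_eq_pow] using hn⟩⟩⟩
  invFun g := ⟨g.1, fun a b => by
    obtain ⟨n, hn⟩ := g.2.exists_pow_eq' Set.finite_univ (Set.mem_univ a) (Set.mem_univ b)
    exact ⟨n, by simpa [← Equiv.Perm.iterate_eq_pow] using hn⟩⟩
  left_inv _ := rfl
  right_inv _ := Subtype.ext (Equiv.ext fun _ => rfl)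

variable (β) in
theorem card_isCyclicMap [Finite β] :
    Nat.card {σ : β → β // IsCyclicMap σ} = (Nat.card β - 1)! := by
  rw [Nat.card_congr (cyclicMapEquivPerm β), card_perm_isCycleOn_univ]

end CyclicMaps

section RootedForest

variable {α : Type*}

def IsRootedForest (S : Finset α) (w : α → α) : Prop :=
  (∀ x ∈ S, w x = x) ∧ ∀ x, ∃ n, w^[n] x ∈ S

theorem isRootedForest_univ_iff [Fintype α] {w : α → α} : IsRootedForest univ w ↔ w = id :=
  ⟨fun hw => funext fun x => hw.1 x (mem_univ x),
    fun hw => ⟨fun _ _ => hw ▸ rfl, fun x => ⟨0, mem_univ x⟩⟩⟩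

theorem isEmpty_isRootedForest_empty [Nonempty α] : IsEmpty {w : α → α // IsRootedForest ∅ w} :=
  ⟨fun w => by simpa using w.2.2 (Classical.arbitrary α)⟩

variable [DecidableEq α] (S : Finset α)

/- Deleting the roots `S` of a forest `w` leaves a forest on the complement of `S`, rooted at the
children of the old roots; `graftRoots` reverses this, given the parents `a` of the new roots. -/

def rootChildren [Fintype α] (w : α → α) : Finset {x // x ∉ S} := {b | w b ∈ S}

def pruneRoots (w : α → α) (b : {x // x ∉ S}) : {x // x ∉ S} :=
  if h : w b ∈ S then b else ⟨w b, h⟩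

def graftRoots (A : Finset {x // x ∉ S}) (a : A → S) (v : {x // x ∉ S} → {x // x ∉ S})
    (x : α) : α :=
  if hx : x ∈ S then x else if hA : ⟨x, hx⟩ ∈ A then a ⟨_, hA⟩ else v ⟨x, hx⟩

variable {S}

@[simp]
theorem mem_rootChildren [Fintype α] {w : α → α} {b : {x // x ∉ S}} :
    b ∈ rootChildren S w ↔ w b ∈ S := by
  simp [rootChildren]

theorem isRootedForest_pruneRoots [Fintype α] {w : α → α} (hw : IsRootedForest S w) :
    IsRootedForest (rootChildren S w) (pruneRoots S w) := by
  refine ⟨fun b hb => dif_pos (mem_rootChildren.1 hb), fun b => ?_⟩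
  refine induction_of_exists_iterate_mem (P := fun x => ∀ hx : x ∉ S, ∃ n,
    (pruneRoots S w)^[n] ⟨x, hx⟩ ∈ rootChildren S w) (fun x hx hx' => absurd hx hx')
    (fun x _ ih hx => ?_) (hw.2 b) b.2
  by_cases hwx : w x ∈ S
  · exact ⟨0, mem_rootChildren.2 hwx⟩
  · obtain ⟨n, hn⟩ := ih hwx
    exact ⟨n + 1, by rwa [iterate_succ_apply, pruneRoots, dif_neg hwx]⟩

section Graft

variable {A : Finset {x // x ∉ S}} {a : A → S} {v : {x // x ∉ S} → {x // x ∉ S}}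

theorem graftRoots_of_mem {x : α} (hx : x ∈ S) : graftRoots S A a v x = x := dif_pos hx

theorem graftRoots_of_mem_children {b : {x // x ∉ S}} (hb : b ∈ A) :
    graftRoots S A a v b = a ⟨b, hb⟩ := by
  simp [graftRoots, b.2, hb]

theorem graftRoots_of_notMem_children {b : {x // x ∉ S}} (hb : b ∉ A) :
    graftRoots S A a v b = v b := by
  simp [graftRoots, b.2, hb]

theorem isRootedForest_graftRoots (hv : IsRootedForest A v) :
    IsRootedForest S (graftRoots S A a v) := by
  refine ⟨fun x hx => graftRoots_of_mem hx, fun x => ?_⟩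
  by_cases hx : x ∈ S
  · exact ⟨0, hx⟩
  refine induction_of_exists_iterate_mem (P := fun b : {x // x ∉ S} => ∃ n,
    (graftRoots S A a v)^[n] b ∈ S) (fun b hb => ⟨1, ?_⟩) (fun b hb ⟨n, hn⟩ => ⟨n + 1, ?_⟩)
    (hv.2 ⟨x, hx⟩)
  · rw [iterate_one, graftRoots_of_mem_children hb]
    exact (a _).2
  · rwa [iterate_succ_apply, graftRoots_of_notMem_children hb]

theorem rootChildren_graftRoots [Fintype α] : rootChildren S (graftRoots S A a v) = A := by
  ext b
  by_cases hb : b ∈ A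
  · simp [graftRoots_of_mem_children hb, hb]
  · simp [graftRoots_of_notMem_children hb, hb, (v b).2]

end Graft

def rootedForestFiberEquiv [Fintype α] (S : Finset α) (A : Finset {x // x ∉ S}) :
    {w // IsRootedForest S w ∧ rootChildren S w = A} ≃
      (A → S) × {v : {x // x ∉ S} → {x // x ∉ S} // IsRootedForest A v} where
  toFun w := (fun b => ⟨w.1 b.1, mem_rootChildren.1 (w.2.2.symm ▸ b.2)⟩,
    ⟨pruneRoots S w.1, by obtain ⟨w, hw, rfl⟩ := w; exact isRootedForest_pruneRoots hw⟩)
  invFun p := ⟨graftRoots S A p.1 p.2.1, isRootedForest_graftRoots p.2.2, rootChildren_graftRoots⟩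
  left_inv := by
    rintro ⟨w, hw, rfl⟩
    ext x
    by_cases hx : x ∈ S
    · simp [graftRoots_of_mem hx, hw.1 x hx]
    by_cases hb : (⟨x, hx⟩ : {x // x ∉ S}) ∈ rootChildren S w
    · simp [graftRoots_of_mem_children hb]
    · simp [graftRoots_of_notMem_children hb, pruneRoots, mem_rootChildren.not.1 hb]
  right_inv := by
    rintro ⟨a, v, hv⟩
    ext b
    · simp [graftRoots_of_mem_children b.2]
    · by_cases hb : b ∈ A
      · simp [pruneRoots, graftRoots_of_mem_children hb, hv.1 b hb]
      · simp [pruneRoots, graftRoots_of_notMem_children hb, (v b).2]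

theorem card_isRootedForest_eq_sum [Fintype α] (S : Finset α) :
    Nat.card {w // IsRootedForest S w} =
      ∑ A : Finset {x // x ∉ S}, #S ^ #A * Nat.card {v // IsRootedForest A v} := by
  rw [Nat.card_subtype_eq_sum_card_fiberwise _ (rootChildren S)]
  refine sum_congr rfl fun A _ => ?_
  rw [Nat.card_congr (rootedForestFiberEquiv S A), Nat.card_prod, Nat.card_fun,
    Nat.card_eq_finsetCard, Nat.card_eq_finsetCard]

theorem card_add_natCard_notMem [Fintype α] (S : Finset α) :
    #S + Nat.card {x // x ∉ S} = Nat.card α := by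
  rw [Nat.card_eq_fintype_card, Fintype.card_subtype_compl, Fintype.card_coe,
    Nat.card_eq_fintype_card, Nat.add_sub_cancel' (card_le_univ S)]

theorem card_isRootedForest_mul_card_mul_of_compl [Fintype α] (S : Finset α)
    (h : ∀ A : Finset {x // x ∉ S}, Nat.card {v // IsRootedForest A v} * Nat.card {x // x ∉ S} =
      #A * Nat.card {x // x ∉ S} ^ (Nat.card {x // x ∉ S} - #A)) :
    Nat.card {w // IsRootedForest S w} * Nat.card α * Nat.card {x // x ∉ S} =
      #S * Nat.card α ^ Nat.card {x // x ∉ S} * Nat.card {x // x ∉ S} := by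
  rw [← card_add_natCard_notMem S]
  set k := #S
  set m := Nat.card {x // x ∉ S}
  calc Nat.card {w // IsRootedForest S w} * (k + m) * m
      = (∑ A : Finset {x // x ∉ S}, k ^ #A * (Nat.card {v // IsRootedForest A v} * m)) *
          (k + m) := by
        rw [card_isRootedForest_eq_sum, sum_mul, sum_mul, sum_mul]
        exact sum_congr rfl fun A _ => by ring
    _ = (∑ j ∈ range (m + 1), k ^ j * m ^ (m - j) * (m.choose j * j)) * (k + m) := by
        simp_rw [h]
        rw [← powerset_univ, sum_powerset_apply_card (fun j => k ^ j * (j * m ^ (m - j))),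
          card_univ, ← Nat.card_eq_fintype_card]
        congr 1
        exact sum_congr rfl fun j _ => by rw [smul_eq_mul]; ring
    _ = m * k * (k + m) ^ (m - 1) * (k + m) := by
        simpa using congrArg (· * (k + m)) (sum_range_pow_mul_pow_mul_choose_mul k m m)
    _ = k * (k + m) ^ m * m := by
        rcases Nat.eq_zero_or_pos m with hm | hm
        · simp [hm]
        · rw [mul_assoc _ ((k + m) ^ _), pow_sub_one_mul hm.ne']
          ring

theorem card_isRootedForest_mul_card [Fintype α] (S : Finset α) :
    Nat.card {w // IsRootedForest S w} * Nat.card α = #S * Nat.card α ^ (Nat.card α - #S) := by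
  induction hn : Nat.card α using Nat.strong_induction_on generalizing α with
  | _ n ih =>
  by_cases hS : S = univ
  · subst hS
    simp_rw [isRootedForest_univ_iff, Nat.card_unique, card_univ, ← Nat.card_eq_fintype_card, hn,
      Nat.sub_self, pow_zero, one_mul, mul_one]
  obtain ⟨x, hx⟩ := not_forall.1 (mt eq_univ_of_forall hS)
  by_cases hS₀ : S = ∅
  · subst hS₀
    have : Nonempty α := ⟨x⟩
    simp [isEmpty_isRootedForest_empty]
  have : Nonempty {x // x ∉ S} := ⟨⟨x, hx⟩⟩
  have hm : 0 < Nat.card {x // x ∉ S} := Nat.card_pos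
  have hk : 0 < #S := card_pos.2 (nonempty_iff_ne_empty.2 hS₀)
  have hcard := card_add_natCard_notMem S
  refine Nat.eq_of_mul_eq_mul_right hm ?_
  rw [← hn, show Nat.card α - #S = Nat.card {x // x ∉ S} by omega]
  exact card_isRootedForest_mul_card_mul_of_compl S fun A => ih _ (by omega) A rfl

end RootedForest

section ConnectedMaps

variable {α : Type*}

def HasConnectedGraph (f : α → α) : Prop := ∀ x y, ∃ m n, f^[m] x = f^[n] y

theorem HasConnectedGraph.exists_iterate_eq {f : α → α} (hf : HasConnectedGraph f) (x : α)
    {y : α} (hy : y ∈ periodicPts f) : ∃ n, f^[n] x = y := by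
  obtain ⟨m, n, hmn⟩ := hf x y
  obtain ⟨c, hc⟩ := exists_iterate_iterate_eq_of_mem_periodicPts hy n
  exact ⟨c + m, by rw [iterate_add_apply, hmn, hc]⟩

variable [DecidableEq α]

def cycleWithForest (Z : Finset α) (σ : Z → Z) (w : α → α) (x : α) : α :=
  if hx : x ∈ Z then σ ⟨x, hx⟩ else w x

variable {Z : Finset α} {σ : Z → Z} {w : α → α}

theorem semiconj_cycleWithForest : Semiconj Subtype.val σ (cycleWithForest Z σ w) :=
  fun a => by simp [cycleWithForest]

theorem eqOn_cycleWithForest : Set.EqOn w (cycleWithForest Z σ w) (↑Z)ᶜ :=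
  fun x hx => by simp [cycleWithForest, show x ∉ Z from hx]

theorem mapsTo_cycleWithForest : Set.MapsTo (cycleWithForest Z σ w) Z Z :=
  fun x hx => by simp [cycleWithForest, show x ∈ Z from hx]

theorem hasConnectedGraph_cycleWithForest (hσ : IsCyclicMap σ) (hw : IsRootedForest Z w) :
    HasConnectedGraph (cycleWithForest Z σ w) := by
  intro x y
  obtain ⟨i, hi⟩ := exists_iterate_mem_of_eqOn_compl eqOn_cycleWithForest (hw.2 x)
  obtain ⟨j, hj⟩ := exists_iterate_mem_of_eqOn_compl eqOn_cycleWithForest (hw.2 y)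
  obtain ⟨c, hc⟩ := hσ ⟨_, hi⟩ ⟨_, hj⟩
  refine ⟨c + i, j, ?_⟩
  rw [iterate_add_apply]
  exact (semiconj_cycleWithForest.iterate_right c ⟨_, hi⟩).symm.trans (congrArg Subtype.val hc)

theorem periodicPts_cycleWithForest (hσ : IsCyclicMap σ) (hw : IsRootedForest Z w) :
    periodicPts (cycleWithForest Z σ w) = Z := by
  refine (periodicPts_subset_of_mapsTo mapsTo_cycleWithForest
    fun x => exists_iterate_mem_of_eqOn_compl eqOn_cycleWithForest (hw.2 x)).antisymm
    fun z hz => ?_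
  obtain ⟨c, hc⟩ := hσ (σ ⟨z, hz⟩) ⟨z, hz⟩
  refine mk_mem_periodicPts (n := c + 1) c.succ_pos ?_
  have := (semiconj_cycleWithForest (σ := σ) (w := w)).iterate_right (c + 1) ⟨z, hz⟩
  rw [iterate_succ_apply, hc] at this
  exact this.symm

theorem isRootedForest_piecewise_id [Finite α] {f : α → α} (hZ : periodicPts f = Z) :
    IsRootedForest Z (Z.piecewise id f) := by
  refine ⟨fun x hx => piecewise_eq_of_mem _ _ _ hx, fun x => ?_⟩
  refine exists_iterate_mem_of_eqOn_compl (f := f) (fun y hy => ?_) ?_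
  · exact (piecewise_eq_of_notMem _ _ _ hy).symm
  · simpa [← hZ] using exists_iterate_mem_periodicPts f x

variable [Fintype α]

def connectedFiberEquiv (Z : Finset α) :
    {f : α → α // HasConnectedGraph f ∧ periodicPts f = Z} ≃
      {σ : Z → Z // IsCyclicMap σ} × {w // IsRootedForest Z w} where
  toFun f :=
    have hmaps : Set.MapsTo f.1 Z Z := mapsTo_of_periodicPts_eq f.2.2
    (⟨hmaps.restrict, fun a b => by
      obtain ⟨n, hn⟩ := f.2.1.exists_iterate_eq a (y := b) (by rw [f.2.2]; exact b.2)
      exact ⟨n, Subtype.ext ((hmaps.coe_iterate_restrict a n).trans hn)⟩⟩,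
     ⟨Z.piecewise id f.1, isRootedForest_piecewise_id f.2.2⟩)
  invFun p := ⟨cycleWithForest Z p.1.1 p.2.1, hasConnectedGraph_cycleWithForest p.1.2 p.2.2,
    periodicPts_cycleWithForest p.1.2 p.2.2⟩
  left_inv f := by
    ext x
    by_cases hx : x ∈ Z <;> simp [cycleWithForest, hx]
  right_inv := by
    rintro ⟨⟨σ, hσ⟩, ⟨w, hw⟩⟩
    ext x
    · simp [cycleWithForest]
    · by_cases hx : x ∈ Z <;> simp [cycleWithForest, hx, hw.1]

theorem card_hasConnectedGraph_eq_sum :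
    Nat.card {f : α → α // HasConnectedGraph f} =
      ∑ Z : Finset α, (#Z - 1)! * Nat.card {w // IsRootedForest Z w} := by
  classical
  rw [Nat.card_subtype_eq_sum_card_fiberwise _ fun f => (periodicPts f).toFinset]
  refine sum_congr rfl fun Z _ => ?_
  rw [← Nat.card_eq_finsetCard, ← card_isCyclicMap, ← Nat.card_prod,
    ← Nat.card_congr (connectedFiberEquiv Z)]
  exact Nat.card_congr (Equiv.subtypeEquivRight fun f => by
    rw [← Finset.coe_inj, Set.coe_toFinset])

theorem card_hasConnectedGraph_mul_card :
    Nat.card {f : α → α // HasConnectedGraph f} * Nat.card α =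
      ∑ k ∈ range (Nat.card α + 1),
        (Nat.card α).choose k * ((k - 1)! * (k * Nat.card α ^ (Nat.card α - k))) := by
  rw [card_hasConnectedGraph_eq_sum, sum_mul]
  simp_rw [mul_assoc, card_isRootedForest_mul_card]
  rw [← powerset_univ,
    sum_powerset_apply_card (fun k => (k - 1)! * (k * Nat.card α ^ (Nat.card α - k))),
    card_univ, Nat.card_eq_fintype_card]
  rfl

end ConnectedMaps

theorem sum_choose_mul_factorial_mul_pow (n : ℕ) :
    ((∑ k ∈ range (n + 1), n.choose k * ((k - 1)! * (k * n ^ (n - k))) : ℕ) : ℚ) =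
      n ! * ∑ m ∈ range n, (n : ℚ) ^ m / m ! := by
  rw [sum_range_succ', mul_sum]
  conv_rhs => rw [← sum_range_reflect]
  push_cast
  simp only [zero_mul, mul_zero, add_zero]
  refine sum_congr rfl fun i hi => ?_
  have h := Nat.choose_mul_factorial_mul_factorial (mem_range.1 hi : i + 1 ≤ n)
  rw [Nat.factorial_succ, show n - (i + 1) = n - 1 - i by omega] at h
  rw [show n - (i + 1) = n - 1 - i by omega]
  have : ((n - 1 - i)! : ℚ) ≠ 0 := by positivity
  field_simp
  rw [← h]
  push_cast
  ring

/-- The number of functions `f : Fin M → Fin M` whose functional graph is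
connected (for all `x y` there are `m n` with `f^[m] x = f^[n] y`) equals
`(M-1)! * ∑_{m=0}^{M-1} M^m / m!`. -/
theorem stmt2 (M : ℕ) (hM : 1 ≤ M) :
    (Set.ncard {f : Fin M → Fin M |
        ∀ x y : Fin M, ∃ m n : ℕ, f^[m] x = f^[n] y} : ℚ)
      = (Nat.factorial (M - 1)) *
          ∑ m ∈ Finset.range M, (M : ℚ) ^ m / (Nat.factorial m) := by
  have hcount := card_hasConnectedGraph_mul_card (α := Fin M)
  rw [Nat.card_fin] at hcount
  refine mul_right_cancel₀ (b := (M : ℚ)) (by positivity) ?_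
  calc (Set.ncard {f : Fin M → Fin M | HasConnectedGraph f} : ℚ) * M
      = ((Nat.card {f : Fin M → Fin M // HasConnectedGraph f} * M : ℕ) : ℚ) := by
        rw [← Nat.card_coe_set_eq]
        push_cast
        rfl
    _ = M ! * ∑ m ∈ range M, (M : ℚ) ^ m / m ! := by
        rw [hcount, sum_choose_mul_factorial_mul_pow]
    _ = (M - 1)! * (∑ m ∈ range M, (M : ℚ) ^ m / m !) * M := by
        rw [← Nat.mul_factorial_pred (by omega : M ≠ 0)]
        push_cast
        ring
end

section
/- For every fixed integer I ≥ 0, the probability R(I,M) that a classical random map on M elements has exactly I introverts converges, as M → ∞, to the Poisson value R(I,∞) = exp(−I − e^{−1}) / I!. In particular the probability of having no introverts converges to exp(−e^{−1}). -/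
/-!
Let `X(f)` be the number of introverts of `f : Fin M → Fin M`. A set `K` of `k` points
consists of introverts exactly when `f` fixes `K` pointwise and maps the complement of `K`
into itself, so the binomial moment `E[C(X, k)]` equals `C(M, k) (M - k)^(M - k) / M^M`.
As `M → ∞` this tends to `e^{-k} / k!`, the `k`-th binomial moment of a Poisson variable of
mean `e⁻¹`, and it is bounded by `1 / k!` uniformly in `M`. Inclusion–exclusion expresses
`P(X = I)` as `∑ₖ (-1)^(k + I) C(k, I) E[C(X, k)]`, and Tannery's theorem lets the limit pass
through this sum, which then sums to the Poisson probability `e^{-I} exp(-e⁻¹) / I!`.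
-/

open Finset Filter Topology
open scoped Nat

lemma sum_range_neg_one_pow_mul_choose_mul_choose (n I : ℕ) :
    ∑ k ∈ range (n + 1), (-1 : ℤ) ^ (k + I) * n.choose k * k.choose I =
      if n = I then 1 else 0 := by
  rcases lt_or_ge n I with hn | hn
  · rw [if_neg hn.ne]
    refine sum_eq_zero fun k hk => ?_
    rw [Nat.choose_eq_zero_of_lt ((mem_range_succ_iff.1 hk).trans_lt hn), Nat.cast_zero, mul_zero]
  obtain ⟨m, rfl⟩ := Nat.exists_eq_add_of_le hn
  have hterm : ∀ t ∈ range (m + 1), (-1 : ℤ) ^ (I + t + I) * (I + m).choose (I + t) *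
      (I + t).choose I = (I + m).choose I * ((-1) ^ t * m.choose t) := by
    intro t _
    have h := Nat.choose_mul (n := I + m) (k := I + t) (s := I) (by omega)
    simp only [Nat.add_sub_cancel_left] at h
    rw [mul_assoc, ← Nat.cast_mul, h, Nat.cast_mul, show I + t + I = t + 2 * I by ring, pow_add,
      pow_mul, neg_one_sq, one_pow]
    ring
  rw [show I + m + 1 = I + (m + 1) by ring, sum_range_add, sum_congr rfl hterm, ← mul_sum,
    Int.alternating_sum_range_choose,
    sum_eq_zero fun k hk => by rw [Nat.choose_eq_zero_of_lt (mem_range.1 hk)]; simp]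
  rcases m with _ | m <;> simp

section Introverts

variable {α : Type*} [Fintype α] [DecidableEq α]

lemma card_filter_card_eq_sum_choose {β : Type*} [Fintype β] (S : β → Finset α) (I : ℕ) :
    (#{b | #(S b) = I} : ℤ) =
      ∑ K : Finset α, (-1 : ℤ) ^ (#K + I) * (#K).choose I * #{b | K ⊆ S b} := by
  calc (#{b | #(S b) = I} : ℤ)
      = ∑ b, ∑ K ∈ (S b).powerset, (-1) ^ (#K + I) * ((#K).choose I : ℤ) := by
        rw [natCast_card_filter]
        refine sum_congr rfl fun b _ => ?_
        rw [sum_powerset_apply_card (fun k => (-1) ^ (k + I) * ((k.choose I : ℕ) : ℤ)),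
          ← sum_range_neg_one_pow_mul_choose_mul_choose]
        simp only [nsmul_eq_mul, mul_assoc, mul_left_comm]
    _ = ∑ K : Finset α, ∑ b with K ⊆ S b, (-1) ^ (#K + I) * ((#K).choose I : ℤ) :=
        sum_comm' fun b K => by simp
    _ = _ := by simp only [sum_const, nsmul_eq_mul, mul_comm]

def introverts (f : α → α) : Finset α := {i | f i = i ∧ ∀ j, j ≠ i → f j ≠ i}

lemma filter_subset_introverts_eq_piFinset (K : Finset α) :
    ({f | K ⊆ introverts f} : Finset (α → α)) =
      Fintype.piFinset fun i => if i ∈ K then {i} else Kᶜ := by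
  ext f
  simp only [mem_filter, mem_univ, true_and, Fintype.mem_piFinset, subset_iff, introverts]
  constructor
  · intro h i
    split_ifs with hi
    · exact mem_singleton.2 (h hi).1
    · exact mem_compl.2 fun hfi => (h hfi).2 i (fun h' => hi (h' ▸ hfi)) rfl
  · intro h i hi
    have hfi : f i = i := by simpa [hi] using h i
    refine ⟨hfi, fun j hji hfj => ?_⟩
    by_cases hj : j ∈ K
    · have hfj' : f j = j := by simpa [hj] using h j
      exact hji (hfj'.symm.trans hfj)
    · have hi' : i ∉ K := by simpa [hj, hfj] using h j
      exact hi' hi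

lemma card_filter_subset_introverts (K : Finset α) :
    #{f : α → α | K ⊆ introverts f} = (Fintype.card α - #K) ^ (Fintype.card α - #K) := by
  rw [filter_subset_introverts_eq_piFinset, Fintype.card_piFinset, ← card_compl]
  simp [apply_ite, prod_ite, ← compl_filter]

/-- `E[C(X, k)]` for `X` the number of introverts of a uniformly random map on `n` points. -/
noncomputable def introvertBinomialMoment (n k : ℕ) : ℝ :=
  n.choose k * ((n - k : ℕ) : ℝ) ^ (n - k) / (n : ℝ) ^ n

lemma card_filter_card_introverts_div (I : ℕ) :
    (#{f : α → α | #(introverts f) = I} : ℝ) / (Fintype.card α : ℝ) ^ Fintype.card α =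
      ∑ k ∈ range (Fintype.card α + 1),
        (-1) ^ (k + I) * k.choose I * introvertBinomialMoment (Fintype.card α) k := by
  set n := Fintype.card α
  have h := card_filter_card_eq_sum_choose (introverts (α := α)) I
  simp_rw [card_filter_subset_introverts] at h
  rw [← powerset_univ, sum_powerset_apply_card
    (fun k => (-1 : ℤ) ^ (k + I) * (k.choose I : ℕ) * ((n - k) ^ (n - k) : ℕ)), card_univ] at h
  have hR : (#{f : α → α | #(introverts f) = I} : ℝ) = ∑ k ∈ range (n + 1),
      n.choose k * ((-1) ^ (k + I) * k.choose I * (((n - k) ^ (n - k) : ℕ) : ℝ)) := by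
    exact_mod_cast h
  rw [hR, sum_div]
  refine sum_congr rfl fun k _ => ?_
  simp only [introvertBinomialMoment]
  push_cast
  ring

end Introverts

lemma introvertBinomialMoment_nonneg (n k : ℕ) : 0 ≤ introvertBinomialMoment n k := by
  unfold introvertBinomialMoment
  positivity

lemma introvertBinomialMoment_eq_zero_of_lt {n k : ℕ} (h : n < k) :
    introvertBinomialMoment n k = 0 := by
  simp [introvertBinomialMoment, Nat.choose_eq_zero_of_lt h]

lemma introvertBinomialMoment_le_inv_factorial (n k : ℕ) :
    introvertBinomialMoment n k ≤ (k ! : ℝ)⁻¹ := by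
  rcases lt_or_ge n k with hnk | hkn
  · rw [introvertBinomialMoment_eq_zero_of_lt hnk]
    positivity
  have hnat : k ! * n.choose k * (n - k) ^ (n - k) ≤ n ^ n :=
    calc k ! * n.choose k * (n - k) ^ (n - k)
        = n.descFactorial k * (n - k) ^ (n - k) := by
          rw [Nat.descFactorial_eq_factorial_mul_choose]
      _ ≤ n ^ k * n ^ (n - k) :=
          Nat.mul_le_mul (Nat.descFactorial_le_pow n k) (Nat.pow_le_pow_left (Nat.sub_le n k) _)
      _ = n ^ n := by rw [← pow_add, Nat.add_sub_cancel' hkn]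
  rw [introvertBinomialMoment, div_le_iff₀ (by exact_mod_cast Nat.pow_self_pos),
    ← div_eq_inv_mul, le_div_iff₀' (by positivity)]
  exact_mod_cast (mul_assoc _ _ _).symm.trans_le hnat

lemma tendsto_choose_div_pow (k : ℕ) :
    Tendsto (fun n : ℕ => (n.choose k : ℝ) / (n : ℝ) ^ k) atTop (𝓝 (k ! : ℝ)⁻¹) := by
  have h := (isEquivalent_choose k).div
    (Asymptotics.IsEquivalent.refl (u := fun n : ℕ => (n : ℝ) ^ k))
  refine h.symm.tendsto_nhds (tendsto_const_nhds.congr' ?_)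
  filter_upwards [eventually_ge_atTop 1] with n hn
  have : (n : ℝ) ^ k ≠ 0 := pow_ne_zero _ (by exact_mod_cast Nat.one_le_iff_ne_zero.1 hn)
  simp only [Pi.div_apply]
  field_simp

lemma tendsto_sub_div_self_pow_sub (k : ℕ) :
    Tendsto (fun n : ℕ => (((n - k : ℕ) : ℝ) / n) ^ (n - k)) atTop (𝓝 (Real.exp (-k))) := by
  rw [← tendsto_add_atTop_iff_nat k, Real.exp_neg]
  refine ((Real.tendsto_one_add_div_pow_exp k).inv₀ (Real.exp_ne_zero _)).congr fun n => ?_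
  rcases eq_or_ne n 0 with rfl | hn
  · simp
  rw [Nat.add_sub_cancel, ← inv_pow]
  congr 1
  push_cast
  field_simp

lemma tendsto_introvertBinomialMoment (k : ℕ) :
    Tendsto (introvertBinomialMoment · k) atTop (𝓝 (Real.exp (-1) ^ k / k !)) := by
  have h := (tendsto_choose_div_pow k).mul (tendsto_sub_div_self_pow_sub k)
  rw [inv_mul_eq_div] at h
  rw [← Real.exp_nat_mul, mul_neg_one]
  refine h.congr' ?_
  filter_upwards [eventually_ge_atTop k] with n hkn
  rw [introvertBinomialMoment, div_pow, ← Nat.add_sub_cancel' hkn, pow_add,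
    Nat.add_sub_cancel_left]
  ring

lemma hasSum_choose_mul_pow_div_factorial (I : ℕ) (x : ℝ) :
    HasSum (fun k => (k.choose I : ℝ) * x ^ k / k !) (x ^ I / I ! * Real.exp x) := by
  rw [← hasSum_nat_add_iff' I, sum_eq_zero fun k hk => by
    rw [Nat.choose_eq_zero_of_lt (mem_range.1 hk), Nat.cast_zero, zero_mul, zero_div], sub_zero,
    Real.exp_eq_exp_ℝ]
  refine ((NormedSpace.expSeries_div_hasSum_exp x).mul_left (x ^ I / I !)).congr_fun fun m => ?_
  rw [add_comm m I, Nat.cast_add_choose, pow_add]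
  field_simp

lemma hasSum_neg_one_pow_mul_choose_mul_pow_div_factorial (I : ℕ) (x : ℝ) :
    HasSum (fun k => (-1) ^ (k + I) * k.choose I * (x ^ k / k !))
      (x ^ I / I ! * Real.exp (-x)) := by
  have h := ((hasSum_choose_mul_pow_div_factorial I (-x)).mul_left ((-1) ^ I)).congr_fun
    (g := fun k => (-1) ^ (k + I) * k.choose I * (x ^ k / k !)) fun k => by rw [neg_pow]; ring
  have hsq : (-1 : ℝ) ^ I * (-1) ^ I = 1 := by rw [← mul_pow]; norm_num
  rwa [neg_pow x, ← mul_assoc, ← mul_div_assoc, ← mul_assoc, hsq, one_mul] at h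

lemma ncard_filter_card_introverts_div_eq_tsum (M I : ℕ) :
    (Set.ncard {f : Fin M → Fin M | #{i | f i = i ∧ ∀ j, j ≠ i → f j ≠ i} = I} : ℝ) /
        (M : ℝ) ^ M =
      ∑' k, (-1) ^ (k + I) * k.choose I * introvertBinomialMoment M k := by
  rw [tsum_eq_sum (s := range (M + 1)) fun k hk => by
    rw [introvertBinomialMoment_eq_zero_of_lt (by simpa using hk), mul_zero]]
  simpa [Set.ncard_eq_toFinset_card', introverts] using
    card_filter_card_introverts_div (α := Fin M) I

/-- For fixed `I`, the probability that a classical random map on `M` elements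
has exactly `I` introverts (isolated fixed points) converges, as `M → ∞`, to
`exp(-I - e⁻¹) / I!`. -/
theorem stmt5 (I : ℕ) :
    Filter.Tendsto (fun M : ℕ =>
        (Set.ncard {f : Fin M → Fin M |
            (Finset.univ.filter (fun i : Fin M =>
              f i = i ∧ ∀ j : Fin M, j ≠ i → f j ≠ i)).card = I} : ℝ)
          / (M : ℝ) ^ M)
      Filter.atTop
      (nhds (Real.exp (-(I : ℝ) - Real.exp (-1)) / (Nat.factorial I : ℝ))) := by
  have hbound : Summable fun k => (k.choose I : ℝ) / k ! := by
    simpa using (hasSum_choose_mul_pow_div_factorial I 1).summable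
  have hlimit : ∑' k, (-1) ^ (k + I) * k.choose I * (Real.exp (-1) ^ k / k !) =
      Real.exp (-I - Real.exp (-1)) / I ! := by
    rw [(hasSum_neg_one_pow_mul_choose_mul_pow_div_factorial I _).tsum_eq, ← Real.exp_nat_mul,
      mul_neg_one, sub_eq_add_neg, Real.exp_add]
    ring
  simp_rw [ncard_filter_card_introverts_div_eq_tsum, ← hlimit]
  refine tendsto_tsum_of_dominated_convergence hbound
    (fun k => (tendsto_introvertBinomialMoment k).const_mul _) (Eventually.of_forall fun M k => ?_)
  rw [norm_mul, norm_mul, norm_pow, norm_neg, norm_one, one_pow, one_mul, Real.norm_natCast,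
    Real.norm_of_nonneg (introvertBinomialMoment_nonneg M k), div_eq_mul_inv]
  exact mul_le_mul_of_nonneg_left (introvertBinomialMoment_le_inv_factorial M k)
    (Nat.cast_nonneg _)
end

section
/- Let M ≥ 1, 0 ≤ j ≤ M, and let φ : {1,…,M} → ℝ be any function, with Z = Σ_{k=1}^M φ(k). Then Σ_f (Π_{x=1}^M φ(f(x))) · |{i : |f^{−1}({i})| = j}| = C(M,j) · Σ_{i=1}^M φ(i)^j (Z − φ(i))^{M−j}, where the outer sum runs over all M^M functions f : {1,…,M} → {1,…,M}. Equivalently, in the fitness random map model the fraction of vertices of degree k = j+1 is n_k = (1/M) Σ_{i=1}^M C(M,k−1) (1 − φ(i)/Z)^{M−k+1} (φ(i)/Z)^{k−1}. -/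
/-- Fitness-weighted degree count: for any `φ : Fin M → ℝ` with `Z = ∑ k, φ k`
and `0 ≤ j ≤ M`,
`∑_f (∏_x φ(f x)) * #{i : |f⁻¹(i)| = j} = C(M,j) * ∑_i φ(i)^j (Z - φ i)^(M-j)`. -/
theorem stmt10 (M j : ℕ) (hM : 1 ≤ M) (hj : j ≤ M) (φ : Fin M → ℝ) :
    ∑ f : Fin M → Fin M,
        (∏ x : Fin M, φ (f x)) *
          ((Finset.univ.filter (fun i : Fin M =>
            (Finset.univ.filter (fun x : Fin M => f x = i)).card = j)).card : ℝ)
      = (Nat.choose M j : ℝ) *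
          ∑ i : Fin M, φ i ^ j * (∑ k : Fin M, φ k - φ i) ^ (M - j) := by
  have key : ∀ i : Fin M,
      (∑ f : Fin M → Fin M,
        if (Finset.univ.filter (fun x : Fin M => f x = i)).card = j then ∏ x, φ (f x) else 0)
      = (Nat.choose M j : ℝ) * (φ i ^ j * (∑ k, φ k - φ i) ^ (M - j)) := by
    intro i
    have h1 : ∀ f : Fin M → Fin M,
        (if (Finset.univ.filter (fun x : Fin M => f x = i)).card = j then ∏ x, φ (f x) else 0)
        = ∑ S ∈ Finset.powersetCard j (Finset.univ : Finset (Fin M)),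
            if (Finset.univ.filter (fun x : Fin M => f x = i)) = S then ∏ x, φ (f x) else 0 := by
      intro f
      by_cases h : (Finset.univ.filter (fun x : Fin M => f x = i)).card = j
      · rw [if_pos h,
          Finset.sum_eq_single (Finset.univ.filter (fun x : Fin M => f x = i))]
        · simp
        · intro S _ hS
          rw [if_neg (fun he => hS he.symm)]
        · intro hnot
          exact absurd (Finset.mem_powersetCard.mpr ⟨Finset.subset_univ _, h⟩) hnot
      · rw [if_neg h, Finset.sum_eq_zero]
        intro S hS
        rw [if_neg]
        intro he
        exact h (he ▸ (Finset.mem_powersetCard.mp hS).2)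
    simp_rw [h1]
    rw [Finset.sum_comm]
    have h2 : ∀ S ∈ Finset.powersetCard j (Finset.univ : Finset (Fin M)),
        (∑ f : Fin M → Fin M,
          if (Finset.univ.filter (fun x : Fin M => f x = i)) = S then ∏ x, φ (f x) else 0)
        = φ i ^ j * (∑ k, φ k - φ i) ^ (M - j) := by
      intro S hS
      obtain ⟨-, hcard⟩ := Finset.mem_powersetCard.mp hS
      set t : Fin M → Finset (Fin M) :=
        fun x => if x ∈ S then {i} else (Finset.univ : Finset (Fin M)).erase i with ht
      have hfilt : (Finset.univ.filter
          (fun f : Fin M → Fin M => (Finset.univ.filter (fun x : Fin M => f x = i)) = S))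
          = Fintype.piFinset t := by
        ext f
        simp only [Finset.mem_filter, Finset.mem_univ, true_and, Fintype.mem_piFinset, ht]
        constructor
        · intro hf x
          by_cases hx : x ∈ S
          · have : f x = i := by
              have := hf ▸ hx
              simpa using (Finset.mem_filter.mp this).2
            simp [hx, this]
          · have : ¬ f x = i := by
              intro hfx
              exact hx (hf ▸ (Finset.mem_filter.mpr ⟨Finset.mem_univ x, hfx⟩))
            simp [hx, this]
        · intro hf
          ext x
          simp only [Finset.mem_filter, Finset.mem_univ, true_and]
          have := hf x
          by_cases hx : x ∈ S
          · simp only [hx, if_pos, Finset.mem_singleton] at this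
            exact ⟨fun _ => hx, fun _ => this⟩
          · simp only [hx, if_neg, Finset.mem_erase, not_false_iff] at this
            exact ⟨fun h => absurd h this.1, fun h => absurd h hx⟩
      rw [← Finset.sum_filter, hfilt, ← Finset.prod_univ_sum]
      have hsum : ∀ x : Fin M, (∑ k ∈ t x, φ k)
          = if x ∈ S then φ i else (∑ k, φ k - φ i) := by
        intro x
        by_cases hx : x ∈ S
        · simp [ht, hx]
        · simp only [ht, hx, if_neg, not_false_iff, if_false]
          rw [Finset.sum_erase_eq_sub (Finset.mem_univ i)]
      simp_rw [hsum]
      rw [Finset.prod_ite, Finset.prod_const, Finset.prod_const]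
      have e1 : Finset.univ.filter (fun x : Fin M => x ∈ S) = S := by
        ext x; simp
      have e2 : (Finset.univ.filter (fun x : Fin M => ¬ x ∈ S)).card = M - j := by
        have : Finset.univ.filter (fun x : Fin M => ¬ x ∈ S) = Sᶜ := by
          ext x; simp
        rw [this, Finset.card_compl, hcard, Fintype.card_fin]
      rw [e1, e2, hcard]
    rw [Finset.sum_congr rfl h2, Finset.sum_const, nsmul_eq_mul,
      Finset.card_powersetCard, Finset.card_univ, Fintype.card_fin]
  have hc : ∀ f : Fin M → Fin M,
      ((Finset.univ.filter (fun i : Fin M =>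
        (Finset.univ.filter (fun x : Fin M => f x = i)).card = j)).card : ℝ)
      = ∑ i : Fin M, if (Finset.univ.filter (fun x : Fin M => f x = i)).card = j
          then (1 : ℝ) else 0 := by
    intro f
    rw [Finset.card_filter]
    push_cast
    rfl
  calc ∑ f : Fin M → Fin M,
        (∏ x : Fin M, φ (f x)) *
          ((Finset.univ.filter (fun i : Fin M =>
            (Finset.univ.filter (fun x : Fin M => f x = i)).card = j)).card : ℝ)
      = ∑ f : Fin M → Fin M, ∑ i : Fin M,
          (if (Finset.univ.filter (fun x : Fin M => f x = i)).card = j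
            then ∏ x, φ (f x) else 0) := by
        refine Finset.sum_congr rfl fun f _ => ?_
        rw [hc, Finset.mul_sum]
        refine Finset.sum_congr rfl fun i _ => ?_
        by_cases h : (Finset.univ.filter (fun x : Fin M => f x = i)).card = j <;> simp [h]
    _ = ∑ i : Fin M, ∑ f : Fin M → Fin M,
          (if (Finset.univ.filter (fun x : Fin M => f x = i)).card = j
            then ∏ x, φ (f x) else 0) := Finset.sum_comm
    _ = ∑ i : Fin M, (Nat.choose M j : ℝ) * (φ i ^ j * (∑ k, φ k - φ i) ^ (M - j)) :=
        Finset.sum_congr rfl fun i _ => key i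
    _ = (Nat.choose M j : ℝ) *
          ∑ i : Fin M, φ i ^ j * (∑ k : Fin M, φ k - φ i) ^ (M - j) := by
        rw [Finset.mul_sum]
end

section
/- Let a > −1 be a real number and for each M ≥ 1 set Z_M = Σ_{k=1}^M k^a. Then lim_{M→∞} (1/M) Σ_{i=1}^M (1 − i^a/Z_M)^M = ∫_0^1 e^{−(a+1)x^a} dx. Consequently, in the algebraic fitness model φ(i) = i^a the asymptotic fraction of followers is f(a) = ∫_0^1 e^{−(a+1)x^a} dx and the asymptotic fraction of experts is e(a) = 1 − ∫_0^1 e^{−(a+1)x^a} dx. -/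
/-!
A sum `(1/M) ∑_{i=1}^M c i` is the integral over `(0, 1]` of the step function
`x ↦ c ⌈x M⌉`. Dominated convergence for these step functions first gives
`Z_M ~ M^(a+1)/(a+1)` (from `c i = (i/M)^a`, dominated by `x^a + 1`, integrable as `a > -1`).
Hence for `i = ⌈x M⌉` we have `M · i^a / Z_M → (a+1) x^a`, so
`(1 - i^a/Z_M)^M → exp (-(a+1) x^a)`, and these terms are bounded by `1`, so dominated
convergence applies once more.
-/

open MeasureTheory Filter Real Set Topology
open scoped Interval

lemma Finset.sum_range_succ_eq_sum_Icc_one (c : ℕ → ℝ) (M : ℕ) :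
    ∑ k ∈ Finset.range M, c (k + 1) = ∑ i ∈ Finset.Icc 1 M, c i := by
  rw [← Finset.Ico_add_one_right_eq_Icc, Finset.sum_Ico_eq_sum_range, Nat.add_sub_cancel]
  simp only [add_comm 1]

lemma intervalIntegral_natCeil_eq_sum_Icc (c : ℕ → ℝ) (M : ℕ) :
    ∫ y in (0:ℝ)..M, c ⌈y⌉₊ = ∑ i ∈ Finset.Icc 1 M, c i := by
  have hpiece (k : ℕ) :
      EqOn (fun y : ℝ => c ⌈y⌉₊) (fun _ => c (k + 1)) (Ι (k : ℝ) (k + 1 : ℕ)) := by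
    intro y hy
    rw [uIoc_of_le (by simp)] at hy
    have hceil : ⌈y⌉₊ = k + 1 := by
      rw [Nat.ceil_eq_iff (Nat.add_one_ne_zero k), Nat.add_sub_cancel]
      exact hy
    exact congrArg c hceil
  have hint (k : ℕ) : IntervalIntegrable (fun y : ℝ => c ⌈y⌉₊) volume k (k + 1 : ℕ) :=
    (intervalIntegrable_congr (hpiece k)).mpr intervalIntegrable_const
  rw [← Finset.sum_range_succ_eq_sum_Icc_one, ← Nat.cast_zero,
    ← intervalIntegral.sum_integral_adjacent_intervals fun k _ => hint k]
  refine Finset.sum_congr rfl fun k _ => ?_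
  rw [intervalIntegral.integral_congr_ae (ae_of_all _ (hpiece k))]
  simp

lemma intervalIntegral_natCeil_mul_eq_sum_Icc (c : ℕ → ℝ) {M : ℕ} (hM : M ≠ 0) :
    ∫ x in (0:ℝ)..1, c ⌈x * M⌉₊ = (1 / M) * ∑ i ∈ Finset.Icc 1 M, c i := by
  rw [intervalIntegral.integral_comp_mul_right (fun y => c ⌈y⌉₊) (Nat.cast_ne_zero.mpr hM),
    zero_mul, one_mul, intervalIntegral_natCeil_eq_sum_Icc, smul_eq_mul, one_div]

lemma natCeil_mul_mem_Icc {M : ℕ} (hM : M ≠ 0) {x : ℝ} (hx : x ∈ Ioc (0:ℝ) 1) :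
    ⌈x * M⌉₊ ∈ Finset.Icc 1 M := by
  have hM' : (0:ℝ) < M := by positivity
  refine Finset.mem_Icc.mpr ⟨Nat.one_le_ceil_iff.mpr (mul_pos hx.1 hM'), Nat.ceil_le.mpr ?_⟩
  exact mul_le_of_le_one_left hM'.le hx.2

theorem tendsto_riemannSum_of_dominated {c : ℕ → ℕ → ℝ} {f g : ℝ → ℝ}
    (hg : IntegrableOn g (Ioc 0 1))
    (hbound : ∀ᶠ M in atTop, ∀ x ∈ Ioc (0:ℝ) 1, ‖c M ⌈x * M⌉₊‖ ≤ g x)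
    (hlim : ∀ x ∈ Ioc (0:ℝ) 1, Tendsto (fun M => c M ⌈x * M⌉₊) atTop (𝓝 (f x))) :
    Tendsto (fun M : ℕ => (1 / M) * ∑ i ∈ Finset.Icc 1 M, c M i) atTop
      (𝓝 (∫ x in (0:ℝ)..1, f x)) := by
  have hdom := intervalIntegral.tendsto_integral_filter_of_dominated_convergence
    (μ := volume) (a := 0) (b := 1) (F := fun (M : ℕ) (x : ℝ) => c M ⌈x * M⌉₊) (f := f) g
    (Eventually.of_forall fun M => ((measurable_from_nat (f := c M)).comp
      (Nat.measurable_ceil.comp (measurable_mul_const _))).aestronglyMeasurable)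
    (hbound.mono fun M hM => ae_of_all _ fun x hx => hM x (by simpa using hx))
    (by simpa [intervalIntegrable_iff] using hg)
    (ae_of_all _ fun x hx => hlim x (by simpa using hx))
  refine hdom.congr' ?_
  filter_upwards [eventually_ne_atTop 0] with M hM
  exact intervalIntegral_natCeil_mul_eq_sum_Icc (c M) hM

lemma tendsto_natCeil_mul_div_natCast {x : ℝ} (hx : 0 ≤ x) :
    Tendsto (fun M : ℕ => (⌈x * M⌉₊ : ℝ) / M) atTop (𝓝 x) :=
  (tendsto_nat_ceil_mul_div_atTop hx).comp tendsto_natCast_atTop_atTop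

theorem tendsto_sum_rpow_div_rpow {a : ℝ} (ha : -1 < a) :
    Tendsto (fun M : ℕ => (∑ k ∈ Finset.Icc 1 M, (k : ℝ) ^ a) / (M : ℝ) ^ (a + 1)) atTop
      (𝓝 (1 / (a + 1))) := by
  have hriemann := tendsto_riemannSum_of_dominated (c := fun M i => ((i : ℝ) / M) ^ a)
    (f := fun x => x ^ a) (g := fun x => x ^ a + 1) ?_ ?_ ?_
  · rw [integral_rpow (Or.inl ha), one_rpow, zero_rpow (by linarith), sub_zero] at hriemann
    refine hriemann.congr' ?_
    filter_upwards [eventually_ne_atTop 0] with M hM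
    have hM' : (0:ℝ) < M := by positivity
    simp only [div_rpow (Nat.cast_nonneg _) hM'.le, ← Finset.sum_div, rpow_add_one hM'.ne']
    field_simp
  · have hint := (intervalIntegral.intervalIntegrable_rpow' ha).add
      (intervalIntegrable_const (c := (1:ℝ)) (μ := volume) (a := 0) (b := 1))
    exact (intervalIntegrable_iff_integrableOn_Ioc_of_le zero_le_one).mp hint
  · filter_upwards [eventually_ne_atTop 0] with M hM x hx
    have hM' : (0:ℝ) < M := by positivity
    have hceil := Finset.mem_Icc.mp (natCeil_mul_mem_Icc hM hx)
    set r : ℝ := (⌈x * M⌉₊ : ℝ) / M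
    have hxr : x ≤ r := (le_div_iff₀ hM').mpr (Nat.le_ceil _)
    have hr1 : r ≤ 1 := (div_le_one hM').mpr (by exact_mod_cast hceil.2)
    have hx0 := rpow_nonneg hx.1.le a
    rw [norm_of_nonneg (rpow_nonneg (hx.1.le.trans hxr) a)]
    rcases le_or_gt 0 a with ha0 | ha0
    · linarith [rpow_le_one (hx.1.le.trans hxr) hr1 ha0]
    · linarith [rpow_le_rpow_of_nonpos hx.1 hxr ha0.le]
  · intro x hx
    exact ((continuousAt_rpow_const x a (Or.inl hx.1.ne')).tendsto).comp
      (tendsto_natCeil_mul_div_natCast hx.1.le)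

lemma norm_one_sub_div_sum_pow_le_one {ι : Type*} {s : Finset ι} {w : ι → ℝ}
    (hw : ∀ j ∈ s, 0 ≤ w j) {i : ι} (hi : i ∈ s) (n : ℕ) :
    ‖(1 - w i / ∑ j ∈ s, w j) ^ n‖ ≤ 1 := by
  have hq0 : 0 ≤ w i / ∑ j ∈ s, w j := div_nonneg (hw i hi) (Finset.sum_nonneg hw)
  have hq1 : w i / ∑ j ∈ s, w j ≤ 1 :=
    div_le_one_of_le₀ (Finset.single_le_sum hw hi) (Finset.sum_nonneg hw)
  rw [norm_pow, Real.norm_of_nonneg (by linarith)]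
  exact pow_le_one₀ (by linarith) (by linarith)

theorem tendsto_one_sub_natCeil_rpow_div_sum_pow {a : ℝ} (ha : -1 < a) {x : ℝ} (hx : 0 < x) :
    Tendsto
      (fun M : ℕ => (1 - (⌈x * M⌉₊ : ℝ) ^ a / ∑ k ∈ Finset.Icc 1 M, (k : ℝ) ^ a) ^ M)
      atTop (𝓝 (exp (-(a + 1) * x ^ a))) := by
  have hinv : Tendsto (fun M : ℕ => (M : ℝ) ^ (a + 1) / ∑ k ∈ Finset.Icc 1 M, (k : ℝ) ^ a)
      atTop (𝓝 (a + 1)) := by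
    simpa using (tendsto_sum_rpow_div_rpow ha).inv₀ (one_div_ne_zero (by linarith))
  have hlim := ((continuousAt_rpow_const x a (Or.inl hx.ne')).tendsto.comp
    (tendsto_natCeil_mul_div_natCast hx.le)).mul hinv
  simp only [sub_eq_add_neg]
  refine Real.tendsto_one_add_pow_exp_of_tendsto ?_
  rw [show -(a + 1) * x ^ a = -(x ^ a * (a + 1)) by ring]
  refine hlim.neg.congr' ?_
  filter_upwards [eventually_ne_atTop 0] with M hM
  have hM' : (0:ℝ) < M := by positivity
  simp only [Function.comp_apply, div_rpow (Nat.cast_nonneg _) hM'.le, rpow_add_one hM'.ne']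
  field_simp

/-- Algebraic fitness model `φ(i) = i^a`, `a > -1`: the asymptotic fraction of
followers is `∫₀¹ exp(-(a+1) x^a) dx`. -/
theorem stmt11 (a : ℝ) (ha : -1 < a) :
    Filter.Tendsto (fun M : ℕ =>
        (1 / (M : ℝ)) * ∑ i ∈ Finset.Icc 1 M,
          (1 - (i : ℝ) ^ a / ∑ k ∈ Finset.Icc 1 M, (k : ℝ) ^ a) ^ M)
      Filter.atTop
      (nhds (∫ x in (0:ℝ)..1, Real.exp (-(a + 1) * x ^ a))) := by
  refine tendsto_riemannSum_of_dominated (g := fun _ => 1) (integrableOn_const (by simp)) ?_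
    fun x hx => tendsto_one_sub_natCeil_rpow_div_sum_pow ha hx.1
  filter_upwards [eventually_ne_atTop 0] with M hM x hx
  exact norm_one_sub_div_sum_pow_le_one (fun k _ => rpow_nonneg (Nat.cast_nonneg k) a)
    (natCeil_mul_mem_Icc hM hx) M
end

section
/- lim_{M→∞} (1/M) Σ_{i=1}^M (1 − 2i/(M(M+1)))^M = (1 − e^{−2})/2. Consequently, in the linear fitness random map model φ(i) = i, the asymptotic fraction of followers is (1 − e^{−2})/2 and the asymptotic fraction of experts is (1 + e^{−2})/2. -/
/-! With `x = c i / (M (M + 1))` one has `e^{-Mx} (1 - M x²) ≤ (1 - x)^M ≤ e^{-Mx}`, where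
`e^{-Mx} = r^i` for `r = e^{-c/(M+1)}` and `M x² ≤ c² / M`. So the average is squeezed between
`(1 - c²/M) A_M` and `A_M = (1/M) ∑ r^i = (r - e^{-c}) / (M (1 - r))`, and `M (1 - r) → c`
because `exp` has derivative `1` at `0`. -/

open Filter Real Finset Topology

theorem tendsto_const_div_natCast_add_one (C : ℝ) :
    Tendsto (fun n : ℕ => C / ((n : ℝ) + 1)) atTop (𝓝 0) := by
  simpa [Function.comp_def] using
    (tendsto_const_div_atTop_nhds_zero_nat C).comp (tendsto_add_atTop_nat 1)

namespace Real

theorem exp_neg_mul_mul_one_sub_le_one_sub_pow {x : ℝ} (hx0 : 0 ≤ x) (hx1 : x ≤ 1) (n : ℕ) :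
    exp (-(n * x)) * (1 - n * x ^ 2) ≤ (1 - x) ^ n := by
  have bernoulli : 1 - n * x ^ 2 ≤ (1 - x ^ 2) ^ n := by
    simpa only [mul_neg, ← sub_eq_add_neg] using one_add_mul_le_pow (a := -x ^ 2) (by nlinarith) n
  have one_sub_sq_le : 1 - x ^ 2 ≤ (1 - x) * exp x := by
    nlinarith [add_one_le_exp x]
  calc exp (-(n * x)) * (1 - n * x ^ 2)
      ≤ exp (-(n * x)) * ((1 - x) * exp x) ^ n := by
        gcongr
        exact bernoulli.trans (pow_le_pow_left₀ (by nlinarith) one_sub_sq_le n)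
    _ = (1 - x) ^ n := by
        rw [mul_pow, ← exp_nat_mul, mul_left_comm, ← exp_add, neg_add_cancel, exp_zero, mul_one]

theorem tendsto_natCast_add_one_mul_one_sub_exp {c : ℝ} (hc : c ≠ 0) :
    Tendsto (fun M : ℕ => ((M : ℝ) + 1) * (1 - exp (-c / (M + 1)))) atTop (𝓝 c) := by
  set h : ℕ → ℝ := fun M => -c / (M + 1)
  have h_tendsto : Tendsto h atTop (𝓝[≠] 0) := by
    refine tendsto_nhdsWithin_of_tendsto_nhds_of_eventually_within _ ?_ (.of_forall fun M => ?_)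
    · exact tendsto_const_div_natCast_add_one (-c)
    · simp [h, hc, Nat.cast_add_one_ne_zero]
  have slope := ((hasDerivAt_exp 0).tendsto_slope_zero.comp h_tendsto).const_mul c
  simp only [zero_add, exp_zero, smul_eq_mul, mul_one] at slope
  refine slope.congr fun M => ?_
  simp only [Function.comp_apply, h]
  field_simp
  ring

theorem tendsto_average_exp_geom {c : ℝ} (hc : c ≠ 0) :
    Tendsto (fun M : ℕ => (1 / (M : ℝ)) * ∑ i ∈ Icc 1 M, exp (-c / (M + 1)) ^ i) atTop
      (𝓝 ((1 - exp (-c)) / c)) := by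
  have ratio_tendsto : Tendsto (fun M : ℕ => exp (-c / (M + 1))) atTop (𝓝 1) := by
    simpa [Function.comp_def] using
      (continuous_exp.tendsto 0).comp (tendsto_const_div_natCast_add_one (-c))
  have denom_tendsto :
      Tendsto (fun M : ℕ => (M : ℝ) * (1 - exp (-c / (M + 1)))) atTop (𝓝 c) := by
    have := (tendsto_natCast_add_one_mul_one_sub_exp hc).sub (ratio_tendsto.const_sub 1)
    rw [sub_self, sub_zero] at this
    exact this.congr fun M => by ring
  refine ((ratio_tendsto.sub_const (exp (-c))).div denom_tendsto hc).congr' ?_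
  filter_upwards [eventually_ge_atTop 1] with M hM
  dsimp only [Pi.div_apply]
  have hr : exp (-c / (M + 1)) ≠ 1 := by
    rw [Ne, exp_eq_one_iff]
    exact div_ne_zero (neg_ne_zero.2 hc) (Nat.cast_add_one_ne_zero M)
  have hpow : exp (-c / (M + 1)) ^ (M + 1) = exp (-c) := by
    rw [← exp_nat_mul]; push_cast; field_simp
  rw [← Ico_add_one_right_eq_Icc, geom_sum_Ico hr (by omega), hpow, pow_one]
  have : (M : ℝ) ≠ 0 := by positivity
  generalize exp (-c / (M + 1)) = r at hr ⊢
  have : 1 - r ≠ 0 := sub_ne_zero.2 hr.symm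
  field_simp
  ring

end Real

-- For `c = 2`, `c * i / (M * (M + 1))` is the probability `i / Z` that a given element is
-- mapped to `i`.
section FitnessRatio

variable {c : ℝ} {M i : ℕ}

theorem fitness_ratio_le (hc : 0 ≤ c) (hi : i ∈ Icc 1 M) :
    c * i / (M * (M + 1)) ≤ c / (M + 1) := by
  have hi_le : (i : ℝ) / M ≤ 1 :=
    div_le_one_of_le₀ (by exact_mod_cast (mem_Icc.1 hi).2) M.cast_nonneg
  calc c * i / (M * (M + 1)) = c / (M + 1) * (i / M) := by
        rw [div_mul_div_comm, mul_comm (M + 1 : ℝ)]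
    _ ≤ c / (M + 1) := mul_le_of_le_one_right (by positivity) hi_le

theorem exp_neg_natCast_mul_fitness_ratio (hi : i ∈ Icc 1 M) :
    exp (-(M * (c * i / (M * (M + 1))))) = exp (-c / (M + 1)) ^ i := by
  have : (M : ℝ) ≠ 0 := Nat.cast_ne_zero.2 (by grind)
  rw [← exp_nat_mul]
  field_simp

theorem one_sub_fitness_ratio_pow_le (hc : 0 ≤ c) (hcM : c ≤ M + 1) (hi : i ∈ Icc 1 M) :
    (1 - c * i / (M * (M + 1))) ^ M ≤ exp (-c / (M + 1)) ^ i := by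
  rw [← exp_neg_natCast_mul_fitness_ratio hi, ← mul_neg, exp_nat_mul]
  have hx_le_one : c * i / (M * (M + 1)) ≤ 1 :=
    (fitness_ratio_le hc hi).trans (div_le_one_of_le₀ hcM (by positivity))
  exact pow_le_pow_left₀ (by linarith) (one_sub_le_exp_neg _) M

theorem exp_pow_mul_le_one_sub_fitness_ratio_pow (hc : 0 ≤ c) (hcM : c ≤ M + 1)
    (hi : i ∈ Icc 1 M) :
    exp (-c / (M + 1)) ^ i * (1 - c ^ 2 / M) ≤ (1 - c * i / (M * (M + 1))) ^ M := by
  set x := c * i / (M * (M + 1))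
  have hx_nonneg : 0 ≤ x := by positivity
  have hx_le : x ≤ c / (M + 1) := fitness_ratio_le hc hi
  have hM : (0 : ℝ) < M := Nat.cast_pos.2 (by grind)
  have hx_le_div : x ≤ c / M := hx_le.trans (div_le_div_of_nonneg_left hc hM (by linarith))
  have hsq : M * x ^ 2 ≤ c ^ 2 / M := by
    calc M * x ^ 2 ≤ M * (c / M) ^ 2 := by gcongr
      _ = c ^ 2 / M := by field_simp
  calc exp (-c / (M + 1)) ^ i * (1 - c ^ 2 / M) ≤ exp (-(M * x)) * (1 - M * x ^ 2) := by
        rw [exp_neg_natCast_mul_fitness_ratio hi]; gcongr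
    _ ≤ (1 - x) ^ M :=
        exp_neg_mul_mul_one_sub_le_one_sub_pow hx_nonneg
          (hx_le.trans (div_le_one_of_le₀ hcM (by positivity))) M

end FitnessRatio

theorem tendsto_average_one_sub_fitness_ratio_pow {c : ℝ} (hc : 0 < c) :
    Tendsto (fun M : ℕ => (1 / (M : ℝ)) * ∑ i ∈ Icc 1 M, (1 - c * i / (M * (M + 1))) ^ M)
      atTop (𝓝 ((1 - exp (-c)) / c)) := by
  have geom := tendsto_average_exp_geom hc.ne'
  have lower : Tendsto (fun M : ℕ => (1 / (M : ℝ)) *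
      ∑ i ∈ Icc 1 M, exp (-c / (M + 1)) ^ i * (1 - c ^ 2 / M)) atTop
      (𝓝 ((1 - exp (-c)) / c)) := by
    have := geom.mul ((tendsto_const_div_atTop_nhds_zero_nat (c ^ 2)).const_sub 1)
    rw [sub_zero, mul_one] at this
    exact this.congr fun M => by rw [← sum_mul, mul_assoc]
  have hcM : ∀ᶠ M : ℕ in atTop, c ≤ M + 1 := by
    filter_upwards [eventually_ge_atTop ⌈c⌉₊] with M hM
    linarith [Nat.le_ceil c, (Nat.cast_le (α := ℝ)).2 hM]
  refine tendsto_of_tendsto_of_tendsto_of_le_of_le' lower geom ?_ ?_ <;>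
    filter_upwards [hcM] with M hM <;> gcongr with i hi
  · exact exp_pow_mul_le_one_sub_fitness_ratio_pow hc.le hM hi
  · exact one_sub_fitness_ratio_pow_le hc.le hM hi

/-- Linear fitness model `φ(i) = i`: the asymptotic fraction of followers is
`(1 - e⁻²)/2`. -/
theorem stmt13 :
    Filter.Tendsto (fun M : ℕ =>
        (1 / (M : ℝ)) * ∑ i ∈ Finset.Icc 1 M,
          (1 - 2 * (i : ℝ) / ((M : ℝ) * ((M : ℝ) + 1))) ^ M)
      Filter.atTop
      (nhds ((1 - Real.exp (-2)) / 2)) :=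
  tendsto_average_one_sub_fitness_ratio_pow two_pos
end

section
/- Let M ≥ 1 and 1 ≤ C ≤ M. The number of ranking-compatible functions f : {1,…,M} → {1,…,M} having exactly C fixed points equals the number of permutations of {1,…,M} having exactly C cycles (fixed points of the permutation counted as cycles), i.e., the unsigned Stirling number of the first kind [M С]. Since every cycle of a ranking-compatible map is a loop, the number of fixed points equals the number of communities, so the probability distribution of the number of communities C of a uniformly random ranking-compatible map is P(C,M) = [M C]/M!. -/
/-!
Both counts obey the recurrence `N (n + 1) (k + 1) = n * N n (k + 1) + N n k` of the unsigned
Stirling numbers of the first kind, because each family on `n + 1` points is in bijection with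
`Fin (n + 1) × (the family on n points)` so that the statistic grows by one exactly when the first
coordinate is `0`.

For a ranking-compatible map `f`, the value `f 0` is unconstrained, while `f` maps the successors
into the successors and so restricts to a ranking-compatible map on `n` points; `0` is fixed iff
`f 0 = 0`. For a permutation, `decomposeFin` writes it as `swap 0 p * ê` where `ê` extends a
permutation `e` of `n` points by the one-point cycle `{0}`. If `p = 0` this adds one cycle; if
`p ≠ 0`, multiplying by `swap 0 p` splices `0` into the cycle of `p`, so `{0}` is absorbed and the
number of cycles is that of `e`.
-/

open Equiv Finset

theorem card_filter_fin_succ_prod {β : Type*} [Fintype β] {n : ℕ} (s : β → ℕ) (k : ℕ) :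
    #{x : Fin (n + 1) × β | s x.2 + (if x.1 = 0 then 1 else 0) = k}
      = #{b | s b + 1 = k} + n * #{b | s b = k} := by
  simp only [card_filter, Fintype.sum_prod_type, Fin.sum_univ_succ, if_true, Fin.succ_ne_zero,
    if_false, add_zero, sum_const, card_univ, Fintype.card_fin, smul_eq_mul]

theorem card_filter_eq_stirlingFirst_of_equiv {X : ℕ → Type*} [∀ n, Fintype (X n)]
    (s : ∀ n, X n → ℕ) (hX₀ : Fintype.card (X 0) = 1) (hs₀ : ∀ x, s 0 x = 0)
    (e : ∀ n, Fin (n + 1) × X n ≃ X (n + 1))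
    (he : ∀ n p x, s (n + 1) (e n (p, x)) = s n x + if p = 0 then 1 else 0) (n k : ℕ) :
    #{x | s n x = k} = n.stirlingFirst k := by
  induction n generalizing k with
  | zero =>
    cases k with
    | zero => simp [hs₀, hX₀]
    | succ k => simp [hs₀]
  | succ n ih =>
    have hcard : #{x | s (n + 1) x = k}
        = #{y : Fin (n + 1) × X n | s n y.2 + (if y.1 = 0 then 1 else 0) = k} :=
      card_equiv (e n).symm fun x => by simp [← he]
    rw [hcard, card_filter_fin_succ_prod]
    cases k with
    | zero => cases n <;> simp [ih]
    | succ k => simp [ih, Nat.stirlingFirst_succ_succ, add_comm]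

theorem Fin.card_filter_apply_eq_self_of_apply_succ {n : ℕ} {f : Fin (n + 1) → Fin (n + 1)}
    {g : Fin n → Fin n} (h : ∀ i, f i.succ = (g i).succ) :
    #{i | f i = i} = #{i | g i = i} + if f 0 = 0 then 1 else 0 := by
  simp only [card_filter, Fin.sum_univ_succ, h, Fin.succ_inj, add_comm]

namespace Equiv.Perm

variable {α : Type*} [DecidableEq α]

theorem IsCycle.swap_mul_of_apply_eq_self [Finite α] {c : Perm α} (hc : c.IsCycle) {a b : α}
    (hab : a ≠ b) (ha : c a = a) (hb : c b ≠ b) : (swap a b * c).IsCycle := by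
  set d := swap a b * c with hd
  have hca : ∀ y, y ≠ a → c y ≠ a := fun y hy h => hy (c.injective (h.trans ha.symm))
  have hda : d a = b := by simp [hd, ha]
  have hdb : d b = c b := by simp [hd, swap_apply_of_ne_of_ne (hca b hab.symm) hb]
  -- off `a`, one step of `c` is one or two steps of `d`, the detour being through `a`
  have step : ∀ y, y ≠ a → d.SameCycle y (c y) := by
    intro y hya
    by_cases hyb : c y = b
    · have hdy : d y = a := by simp [hd, hyb]
      rw [hyb, ← hda, ← hdy]
      exact ((SameCycle.refl d y).apply_right).trans (hdy ▸ (SameCycle.refl d (d y)).apply_right)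
    · have hdy : d y = c y := by simp [hd, swap_apply_of_ne_of_ne (hca y hya) hyb]
      exact hdy ▸ (SameCycle.refl d y).apply_right
  have reach : ∀ n : ℕ, d.SameCycle b ((c ^ n) b) := by
    intro n
    induction n with
    | zero => exact SameCycle.refl _ _
    | succ n ih =>
      have hn : (c ^ n) b ≠ a := by
        simpa [pow_apply_eq_self_of_apply_eq_self ha n] using (c ^ n).injective.ne hab.symm
      rw [pow_succ', mul_apply]
      exact ih.trans (step _ hn)
  refine ⟨b, hdb ▸ hb, fun y hy => ?_⟩
  rcases eq_or_ne y a with rfl | hya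
  · exact (hda ▸ (SameCycle.refl d y).apply_right).symm
  · have hcy : c y ≠ y := by
      intro hcy
      have hyb : y ≠ b := by rintro rfl; exact hb hcy
      exact hy (by simp [hd, hcy, swap_apply_of_ne_of_ne hya hyb])
    obtain ⟨n, rfl⟩ := (hc.sameCycle hb hcy).exists_nat_pow_eq
    exact reach n

theorem disjoint_swap_of_apply_eq_self {σ : Perm α} {a b : α} (ha : σ a = a) (hb : σ b = b) :
    (swap a b).Disjoint σ := by
  intro x
  by_cases hx : x = a ∨ x = b
  · rcases hx with rfl | rfl <;> simp [*]
  · push Not at hx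
    exact Or.inl (swap_apply_of_ne_of_ne hx.1 hx.2)

variable [Fintype α]

-- Mathlib's `cycleType` omits the fixed points, which are cycles of length one here.
def cycleCount (σ : Perm α) : ℕ := Multiset.card σ.cycleType + #{x | σ x = x}

theorem filter_swap_mul_apply_eq_self {σ : Perm α} {a b : α} (hab : a ≠ b) (ha : σ a = a) :
    ({x | (swap a b * σ) x = x} : Finset α) = ({x | σ x = x} : Finset α) \ {a, b} := by
  ext x
  simp only [mem_filter, mem_univ, true_and, mem_sdiff, mem_insert, mem_singleton, not_or,
    mul_apply, swap_apply_eq_iff]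
  rcases eq_or_ne x a with rfl | hxa
  · simpa [ha] using hab
  rcases eq_or_ne x b with rfl | hxb
  · simpa using fun h => hab (σ.injective (ha.trans h.symm))
  · simp [swap_apply_of_ne_of_ne hxa hxb, hxa, hxb]

theorem card_cycleType_swap_mul_of_apply_eq_self {σ : Perm α} {a b : α} (hab : a ≠ b)
    (ha : σ a = a) (hb : σ b = b) :
    Multiset.card (swap a b * σ).cycleType = Multiset.card σ.cycleType + 1 := by
  rw [(disjoint_swap_of_apply_eq_self ha hb).cycleType_mul, (isCycle_swap hab).cycleType,
    Multiset.card_add, add_comm]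
  rfl

theorem card_cycleType_swap_mul_of_apply_ne {σ : Perm α} {a b : α} (hab : a ≠ b)
    (ha : σ a = a) (hb : σ b ≠ b) :
    Multiset.card (swap a b * σ).cycleType = Multiset.card σ.cycleType := by
  set c := σ.cycleOf b
  have hc : c.IsCycle := σ.isCycle_cycleOf hb
  have hτc : (σ * c⁻¹).Disjoint c :=
    disjoint_mul_inv_of_mem_cycleFactorsFinset (cycleOf_mem_cycleFactorsFinset_iff.mpr
      (mem_support.mpr hb))
  set τ := σ * c⁻¹ with hτ
  have hσ : σ = τ * c := by rw [hτ, inv_mul_cancel_right]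
  clear_value τ
  have hca : c a = a := by simp [c, cycleOf_apply, ha]
  have hcb : c b ≠ b := by simpa [c] using hb
  have hτa : τ a = a := by rw [hτ, mul_apply, inv_eq_iff_eq.mpr hca.symm, ha]
  have hτ_swap : (swap a b).Disjoint τ :=
    disjoint_swap_of_apply_eq_self hτa ((hτc b).resolve_right hcb)
  have hswap : swap a b * σ = τ * (swap a b * c) := by
    rw [hσ, ← mul_assoc, ← mul_assoc, hτ_swap.commute.eq]
  rw [hswap, (hτ_swap.symm.mul_right hτc).cycleType_mul, hσ, hτc.cycleType_mul,
    (hc.swap_mul_of_apply_eq_self hab hca hcb).cycleType, hc.cycleType]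
  simp

theorem cycleCount_swap_mul {σ : Perm α} {a b : α} (hab : a ≠ b) (ha : σ a = a) :
    (swap a b * σ).cycleCount + 1 = σ.cycleCount := by
  have haF : a ∈ ({x | σ x = x} : Finset α) := by simpa using ha
  rw [cycleCount, cycleCount, filter_swap_mul_apply_eq_self hab ha, sdiff_insert,
    sdiff_singleton_eq_erase]
  by_cases hb : σ b = b
  · have hbF : b ∈ ({x | σ x = x} : Finset α) := by simpa using hb
    rw [card_cycleType_swap_mul_of_apply_eq_self hab ha hb, ← card_erase_add_one hbF,
      ← card_erase_add_one (mem_erase.mpr ⟨hab, haF⟩)]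
    ring
  · have hbF : b ∉ ({x | σ x = x} : Finset α) := by simpa using hb
    rw [erase_eq_of_notMem hbF, card_cycleType_swap_mul_of_apply_ne hab ha hb,
      ← card_erase_add_one haF, add_assoc]

theorem decomposeFin_symm_zero_eq_extendDomain {n : ℕ} (e : Perm (Fin n)) :
    decomposeFin.symm (0, e) = e.extendDomain (finSuccAboveEquiv 0) := by
  refine Equiv.ext fun x => ?_
  refine Fin.cases ?_ (fun i => ?_) x
  · rw [decomposeFin_symm_apply_zero, extendDomain_apply_not_subtype _ _ (by simp)]
  · rw [decomposeFin_symm_apply_succ, swap_self, refl_apply]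
    simpa [finSuccAboveEquiv_apply] using (extendDomain_apply_image e (finSuccAboveEquiv 0) i).symm

theorem cycleCount_decomposeFin_symm {n : ℕ} (p : Fin (n + 1)) (e : Perm (Fin n)) :
    (decomposeFin.symm (p, e)).cycleCount = e.cycleCount + if p = 0 then 1 else 0 := by
  have hzero : (decomposeFin.symm (0, e)).cycleCount = e.cycleCount + 1 := by
    rw [cycleCount, cycleCount, Fin.card_filter_apply_eq_self_of_apply_succ (g := e) (by simp),
      decomposeFin_symm_apply_zero, if_pos rfl, decomposeFin_symm_zero_eq_extendDomain,
      cycleType_extendDomain, add_assoc]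
  rcases eq_or_ne p 0 with rfl | hp
  · rw [hzero, if_pos rfl]
  · have hswap : decomposeFin.symm (p, e) = swap 0 p * decomposeFin.symm (0, e) := by
      ext x
      refine Fin.cases ?_ (fun i => ?_) x <;> simp
    rw [if_neg hp, add_zero, ← add_left_inj 1, ← hzero, hswap]
    exact cycleCount_swap_mul hp.symm (decomposeFin_symm_apply_zero 0 e)

theorem card_filter_cycleCount_eq_stirlingFirst (n k : ℕ) :
    #{σ : Perm (Fin n) | σ.cycleCount = k} = n.stirlingFirst k :=
  card_filter_eq_stirlingFirst_of_equiv (fun _ σ => σ.cycleCount) (by simp)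
    (fun σ => by simp [Subsingleton.elim σ 1, cycleCount]) (fun _ => decomposeFin.symm)
    (fun _ => cycleCount_decomposeFin_symm) n k

end Equiv.Perm

abbrev RankingCompatible (n : ℕ) := {f : Fin n → Fin n // ∀ i, i ≤ f i}

namespace RankingCompatible

theorem apply_succ_ne_zero {n : ℕ} (f : RankingCompatible (n + 1)) (i : Fin n) :
    f.1 i.succ ≠ 0 :=
  ((Fin.succ_pos i).trans_le (f.2 i.succ)).ne'

def consEquiv (n : ℕ) : Fin (n + 1) × RankingCompatible n ≃ RankingCompatible (n + 1) where
  toFun x := ⟨Fin.cons x.1 fun i => (x.2.1 i).succ, Fin.cases (Fin.zero_le _) fun i => by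
    simpa using x.2.2 i⟩
  invFun f := (f.1 0, ⟨fun i => (f.1 i.succ).pred (f.apply_succ_ne_zero i), fun i => by
    simpa [Fin.le_pred_iff] using f.2 i.succ⟩)
  left_inv x := by ext <;> simp
  right_inv f := by
    ext i : 2
    refine Fin.cases ?_ (fun i => ?_) i <;> simp

theorem card_filter_apply_eq_self_consEquiv {n : ℕ} (p : Fin (n + 1)) (g : RankingCompatible n) :
    #{i | (consEquiv n (p, g)).1 i = i} = #{i | g.1 i = i} + if p = 0 then 1 else 0 :=
  Fin.card_filter_apply_eq_self_of_apply_succ fun _ => rfl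

theorem card_filter_fixedPoints_eq_stirlingFirst (n k : ℕ) :
    #{f : Fin n → Fin n | (∀ i, i ≤ f i) ∧ #{i | f i = i} = k} = n.stirlingFirst k := by
  rw [← card_filter_eq_stirlingFirst_of_equiv
    (fun n (f : RankingCompatible n) => #{i | f.1 i = i}) rfl (fun _ => by simp) consEquiv
    (fun _ => card_filter_apply_eq_self_consEquiv)]
  simp only [← Fintype.card_subtype]
  exact Fintype.card_congr (Equiv.subtypeSubtypeEquivSubtypeInter _ _).symm

end RankingCompatible

theorem stmt14_general (M C : ℕ) :
    (Finset.univ.filter (fun f : Fin M → Fin M =>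
        (∀ i : Fin M, i ≤ f i) ∧
        (Finset.univ.filter (fun i : Fin M => f i = i)).card = C)).card
      = (Finset.univ.filter (fun σ : Equiv.Perm (Fin M) =>
          σ.cycleType.card +
            (Finset.univ.filter (fun x : Fin M => σ x = x)).card = C)).card :=
  (RankingCompatible.card_filter_fixedPoints_eq_stirlingFirst M C).trans
    (Perm.card_filter_cycleCount_eq_stirlingFirst M C).symm

/-- The number of ranking-compatible maps `f : Fin M → Fin M` (i.e. `i ≤ f i`
for all `i`) with exactly `C` fixed points equals the number of permutations of
`Fin M` with exactly `C` cycles (fixed points counted as cycles), i.e. the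
unsigned Stirling number of the first kind. -/
theorem stmt14 (M C : ℕ) (hM : 1 ≤ M) (hC : 1 ≤ C) (hCM : C ≤ M) :
    (Finset.univ.filter (fun f : Fin M → Fin M =>
        (∀ i : Fin M, i ≤ f i) ∧
        (Finset.univ.filter (fun i : Fin M => f i = i)).card = C)).card
      = (Finset.univ.filter (fun σ : Equiv.Perm (Fin M) =>
          σ.cycleType.card +
            (Finset.univ.filter (fun x : Fin M => σ x = x)).card = C)).card :=
  stmt14_general M C
end

section
/- For every integer k ≥ 1, lim_{M→∞} (1/(M·M!)) Σ_f |{i : |f^{−1}({i})| = k−1}| = 2^{−k}, where the sum runs over all M! ranking-compatible functions f : {1,…,M} → {1,…,M}. That is, the asymptotic fraction of vertices of degree k in a uniformly random ranking-compatible map is n_k = 2^{−k}; in particular the asymptotic fraction of followers is 1/2. -/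
/-!
Deleting the vertex `0` splits a ranking-compatible map `f` on `M + 1` vertices into the value
`f 0`, which is arbitrary, and a ranking-compatible map `g` on the remaining `M` vertices; the
in-degree of a vertex `i` is its in-degree under `g` plus `[f 0 = i]`. Summing a test function
`F` of the in-degrees over all maps therefore satisfies a linear recurrence involving `F` and
its shift `d ↦ F (d + 1)`. By Stolz–Cesàro against `M ^ 2`, the average `L F` of `F` over the
vertices of a random map converges and satisfies `L F = (L (F ∘ succ) + F 0) / 2`, whence
`L F = ∑ d, F d / 2 ^ (d + 1)` for finitely supported `F`, and `2 ^ (-k)` for the indicator of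
in-degree `k - 1`.
-/

open Finset Filter Topology Asymptotics Nat

theorem tendsto_div_of_tendsto_sub_div_sub {a b : ℕ → ℝ} {L : ℝ} (hb : StrictMono b)
    (hb_top : Tendsto b atTop atTop)
    (h : Tendsto (fun n => (a (n + 1) - a n) / (b (n + 1) - b n)) atTop (𝓝 L)) :
    Tendsto (fun n => a n / b n) atTop (𝓝 L) := by
  have hgap (n : ℕ) : 0 < b (n + 1) - b n := sub_pos.2 (hb n.lt_succ_self)
  have hstep : (fun n => (a (n + 1) - a n) - L * (b (n + 1) - b n)) =o[atTop]
      fun n => b (n + 1) - b n := by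
    rw [isLittleO_iff_tendsto fun n hn => absurd hn (hgap n).ne']
    refine (tendsto_sub_nhds_zero_iff.2 h).congr fun n => ?_
    field_simp [(hgap n).ne']
  have hsum : (fun n => (a n - a 0) - L * (b n - b 0)) =o[atTop] fun n => b n - b 0 := by
    refine (hstep.sum_range (fun n => (hgap n).le) ?_).congr
      (fun n => by rw [sum_sub_distrib, ← mul_sum, sum_range_sub, sum_range_sub])
      (fun n => sum_range_sub b n)
    simp only [sum_range_sub]
    exact tendsto_atTop_add_const_right _ (-b 0) hb_top
  have hb_norm : Tendsto (norm ∘ b) atTop atTop := tendsto_norm_atTop_atTop.comp hb_top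
  have hmain : (fun n => a n - L * b n) =o[atTop] b := by
    have hshift : (fun n => b n - b 0) =O[atTop] b :=
      (isBigO_refl b _).sub (isLittleO_const_left.2 (Or.inr hb_norm)).isBigO
    refine ((hsum.trans_isBigO hshift).add
      (isLittleO_const_left (c := a 0 - L * b 0).2 (Or.inr hb_norm))).congr_left fun n => ?_
    ring
  refine tendsto_sub_nhds_zero_iff.1 (hmain.tendsto_div_nhds_zero.congr' ?_)
  filter_upwards [hb_top.eventually_gt_atTop 0] with n hn
  field_simp

section InDegree

variable {α β γ : Type*} [Fintype α] [DecidableEq β] [DecidableEq γ]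

def inDegree (f : α → β) (b : β) : ℕ := #{a | f a = b}

theorem inDegree_cons {n : ℕ} (c : β) (h : Fin n → β) (b : β) :
    inDegree (Fin.cons c h : Fin (n + 1) → β) b = (if c = b then 1 else 0) + inDegree h b := by
  simp only [inDegree, Fin.card_filter_univ_succ', Fin.cons_zero, Fin.cons_succ]

theorem inDegree_comp_apply {e : β → γ} (he : Function.Injective e) (g : α → β) (b : β) :
    inDegree (e ∘ g) (e b) = inDegree g b := by
  simp only [inDegree, Function.comp_apply, he.eq_iff]

theorem inDegree_eq_zero_of_notMem_range {g : α → β} {b : β} (hb : b ∉ Set.range g) :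
    inDegree g b = 0 :=
  Finset.card_eq_zero.2 (filter_eq_empty_iff.2 fun a _ ha => hb ⟨a, ha⟩)

end InDegree

theorem sum_apply_ite_eq_add {n : ℕ} (F : ℕ → ℝ) (b : Fin (n + 1)) (d : ℕ) :
    ∑ c : Fin (n + 1), F ((if c = b then 1 else 0) + d) = n * F d + F (d + 1) := by
  rw [← add_sum_erase _ _ (mem_univ b),
    sum_congr rfl fun c hc => by rw [if_neg (ne_of_mem_erase hc)]]
  simp [card_erase_of_mem, add_comm]

def rankingMaps (M : ℕ) : Finset (Fin M → Fin M) := {f | ∀ i, i ≤ f i}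

theorem sum_rankingMaps_succ {β : Type*} [AddCommMonoid β] (M : ℕ)
    (G : (Fin (M + 1) → Fin (M + 1)) → β) :
    ∑ f ∈ rankingMaps (M + 1), G f =
      ∑ c, ∑ g ∈ rankingMaps M, G (Fin.cons c (Fin.succ ∘ g)) := by
  rw [← sum_product']
  symm
  refine sum_nbij (fun p => Fin.cons p.1 (Fin.succ ∘ p.2)) ?_ ?_ ?_ fun _ _ => rfl
  · rintro ⟨c, g⟩ hg
    simp only [rankingMaps, mem_product, mem_filter, mem_univ, true_and] at hg ⊢
    refine Fin.cases (Fin.zero_le _) fun i => ?_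
    simpa using hg i
  · rintro ⟨c, g⟩ _ ⟨c', g'⟩ _ h
    obtain ⟨rfl, h⟩ := Fin.cons_injective2 h
    simpa using (Fin.succ_injective M).comp_left h
  · intro f hf
    simp only [rankingMaps, coe_filter, mem_univ, true_and, Set.mem_ofPred_eq] at hf
    have hpos (i : Fin M) : f i.succ ≠ 0 := fun h =>
      Fin.succ_ne_zero i (le_antisymm (h ▸ hf i.succ) (Fin.zero_le _))
    refine ⟨(f 0, fun i => (f i.succ).pred (hpos i)), ?_, ?_⟩
    · simp only [rankingMaps, mem_coe, mem_product, mem_filter, mem_univ, true_and]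
      exact fun i => (Fin.le_pred_iff _).2 (hf i.succ)
    · ext1 i
      refine Fin.cases ?_ (fun i => ?_) i <;> simp

theorem card_rankingMaps (M : ℕ) : #(rankingMaps M) = M ! := by
  induction M with
  | zero => rfl
  | succ M ih =>
    rw [card_eq_sum_ones, sum_rankingMaps_succ]
    simp [ih, factorial_succ]

noncomputable def degreeSum (M : ℕ) (F : ℕ → ℝ) : ℝ :=
  ∑ f ∈ rankingMaps M, ∑ i, F (inDegree f i)

theorem degreeSum_succ (M : ℕ) (F : ℕ → ℝ) :
    degreeSum (M + 1) F =
      M * degreeSum M F + degreeSum M (fun d => F (d + 1)) + M ! * (M * F 0 + F 1) := by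
  have hzero (g : Fin M → Fin M) : inDegree (Fin.succ ∘ g) 0 = 0 :=
    inDegree_eq_zero_of_notMem_range fun ⟨i, hi⟩ => Fin.succ_ne_zero _ hi
  calc degreeSum (M + 1) F
      = ∑ g ∈ rankingMaps M, ∑ i, ∑ c,
          F ((if c = i then 1 else 0) + inDegree (Fin.succ ∘ g) i) := by
        rw [degreeSum, sum_rankingMaps_succ, sum_comm]
        simp only [inDegree_cons]
        exact sum_congr rfl fun g _ => sum_comm
    _ = ∑ g ∈ rankingMaps M,
          ((M * F 0 + F 1) + ∑ i, (M * F (inDegree g i) + F (inDegree g i + 1))) := by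
        simp only [sum_apply_ite_eq_add]
        simp only [Fin.sum_univ_succ, hzero, inDegree_comp_apply (Fin.succ_injective M)]
    _ = _ := by
        simp only [sum_add_distrib, sum_const, card_rankingMaps, degreeSum, mul_sum, nsmul_eq_mul]
        ring

theorem natCast_mul_degreeSum_div_factorial_sub (M : ℕ) (F : ℕ → ℝ) :
    ((M + 1 : ℕ) : ℝ) * (degreeSum (M + 1) F / (M + 1)!) - M * (degreeSum M F / M !) =
      degreeSum M (fun d => F (d + 1)) / M ! + M * F 0 + F 1 := by
  rw [degreeSum_succ, factorial_succ]
  push_cast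
  field_simp
  ring

theorem tendsto_degreeSum_div {N : ℕ} {F : ℕ → ℝ} (hF : ∀ d, N ≤ d → F d = 0) :
    Tendsto (fun M : ℕ => degreeSum M F / (M * M !)) atTop
      (𝓝 (∑ d ∈ range N, F d * (1 / 2) ^ (d + 1))) := by
  induction N generalizing F with
  | zero => simp [degreeSum, hF]
  | succ N ih =>
    have hshift := ih (F := fun d => F (d + 1)) fun d hd => hF _ (by omega)
    have hinv : Tendsto (fun M : ℕ => 1 / (M : ℝ)) atTop (𝓝 0) :=
      tendsto_one_div_atTop_nhds_zero_nat
    have hstep := ((hshift.add_const (F 0)).add (hinv.const_mul (F 1))).div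
      (tendsto_const_nhds (x := (2 : ℝ)).add hinv) (by norm_num)
    have hsq : StrictMono fun M : ℕ => (M : ℝ) ^ 2 := fun m n h =>
      pow_lt_pow_left₀ (Nat.cast_lt.2 h) (Nat.cast_nonneg _) two_ne_zero
    have hsq_top : Tendsto (fun M : ℕ => (M : ℝ) ^ 2) atTop atTop :=
      (tendsto_pow_atTop two_ne_zero).comp tendsto_natCast_atTop_atTop
    have hquot := tendsto_div_of_tendsto_sub_div_sub (a := fun M : ℕ => M * (degreeSum M F / M !))
      hsq hsq_top <| hstep.congr' <| by
        filter_upwards [eventually_ge_atTop 1] with M hM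
        have hgap : ((M + 1 : ℕ) : ℝ) ^ 2 - (M : ℝ) ^ 2 = 2 * M + 1 := by push_cast; ring
        simp only [Pi.div_apply, natCast_mul_degreeSum_div_factorial_sub, hgap]
        field_simp
    have hlimit : (∑ d ∈ range N, F (d + 1) * (1 / 2) ^ (d + 1) + F 0 + F 1 * 0) / (2 + 0) =
        ∑ d ∈ range (N + 1), F d * (1 / 2) ^ (d + 1) := by
      rw [sum_range_succ']
      simp only [pow_succ, ← mul_assoc, ← sum_mul]
      ring
    rw [← hlimit]
    refine hquot.congr fun M => ?_
    rcases M.eq_zero_or_pos with rfl | hM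
    · simp
    · field_simp

/-- For fixed `k ≥ 1`, the asymptotic fraction of vertices of degree `k`
(in-degree `k-1`) in a uniformly random ranking-compatible map is `2^{-k}`. -/
theorem stmt18 (k : ℕ) (hk : 1 ≤ k) :
    Filter.Tendsto (fun M : ℕ =>
        (∑ f ∈ Finset.univ.filter (fun f : Fin M → Fin M => ∀ i : Fin M, i ≤ f i),
            ((Finset.univ.filter (fun i : Fin M =>
              (Finset.univ.filter (fun x : Fin M => f x = i)).card = k - 1)).card : ℝ))
          / ((M : ℝ) * (Nat.factorial M : ℝ)))
      Filter.atTop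
      (nhds ((1 / 2 : ℝ) ^ k)) := by
  have hlim := tendsto_degreeSum_div (N := k) (F := fun d => if d = k - 1 then 1 else 0)
    fun d hd => if_neg (by omega)
  have hvalue : ∑ d ∈ range k, (if d = k - 1 then (1 : ℝ) else 0) * (1 / 2) ^ (d + 1) =
      (1 / 2) ^ k := by
    simp [Nat.sub_add_cancel hk, Nat.one_le_iff_ne_zero.1 hk]
  rw [hvalue] at hlim
  refine hlim.congr fun M => ?_
  simp only [degreeSum, natCast_card_filter]
  rfl
end

section
/- lim_{M→∞} (1/M) Σ_{j=1}^M Π_{i=1}^j (1 − 2(j−i+1)/((M−i+1)(M−i+2))) = (e² − 5)/4. Consequently, in the linear-rank random map model the asymptotic fraction of followers is n_1 = (e² − 5)/4 and the asymptotic fraction of experts is (9 − e²)/4. -/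
/-!
Each factor of `Ψ_j(M)` splits as `(M - i)/(M - i + 2) · (1 + tᵢ)` with
`tᵢ = 2(M - j)/((M - i)(M - i + 1))`. The first factors telescope to
`(M - j)(M - j + 1)/(M(M + 1)) ≈ (1 - j/M)²`, and the `tᵢ` telescope to `∑ tᵢ = 2j/M` with
every `tᵢ ≤ 2/(M - j + 1)`, so `e^{2j/M - ∑ tᵢ²} ≤ ∏ (1 + tᵢ) ≤ e^{2j/M}` pins the product
down. Hence `Ψ_j(M) = g(j/M) + O(1/M)` uniformly in `j`, where `g(x) = e^{2x}(1 - x)²`, and the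
average of the `Ψ_j(M)` is, up to `O(1/M)`, a Riemann sum of the decreasing function `g`, whose
integral over `[0, 1]` is `(e² - 5)/4`.
-/

open Finset Real Filter Topology

theorem Real.exp_sub_sq_le_one_add {t : ℝ} (ht : 0 ≤ t) : exp (t - t ^ 2) ≤ 1 + t := by
  have hq : 0 < 1 - t + t ^ 2 := by nlinarith
  calc exp (t - t ^ 2) = (exp (t ^ 2 - t))⁻¹ := by rw [← exp_neg]; ring_nf
    _ ≤ (1 - t + t ^ 2)⁻¹ := by
        gcongr; linarith [add_one_le_exp (t ^ 2 - t)]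
    _ ≤ 1 + t := by
        rw [inv_le_iff_one_le_mul₀ hq]; nlinarith [pow_nonneg ht 3]

section ProdOneAdd

variable {ι : Type*} (s : Finset ι) {t : ι → ℝ}

theorem Real.prod_one_add_le_exp_sum_of_nonneg (ht : ∀ i ∈ s, 0 ≤ t i) :
    ∏ i ∈ s, (1 + t i) ≤ exp (∑ i ∈ s, t i) := by
  rw [exp_sum]
  exact prod_le_prod (fun i hi ↦ by linarith [ht i hi]) fun i _ ↦ by
    linarith [add_one_le_exp (t i)]

theorem Real.exp_sum_sub_sum_sq_le_prod_one_add (ht : ∀ i ∈ s, 0 ≤ t i) :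
    exp (∑ i ∈ s, t i - ∑ i ∈ s, t i ^ 2) ≤ ∏ i ∈ s, (1 + t i) := by
  rw [← sum_sub_distrib, exp_sum]
  exact prod_le_prod (fun i _ ↦ (exp_pos _).le) fun i hi ↦ exp_sub_sq_le_one_add (ht i hi)

end ProdOneAdd

theorem prod_Icc_sub_div_sub_add_two {m : ℝ} {j : ℕ} (hj : (j : ℝ) < m) :
    ∏ i ∈ Icc 1 j, (m - i) / (m - i + 2) = (m - j) * (m - j + 1) / (m * (m + 1)) := by
  induction j with
  | zero =>
    have hm : 0 < m := by simpa using hj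
    simp [div_self (by positivity : m * (m + 1) ≠ 0)]
  | succ j ih =>
    push_cast at hj
    rw [prod_Icc_succ_top (by omega), ih (by linarith)]
    push_cast
    have : 0 < m - j - 1 := by linarith
    have : m - (j + 1) + 2 ≠ 0 := by linarith
    have : 0 < m * (m + 1) := by nlinarith [j.cast_nonneg (α := ℝ)]
    field_simp
    ring

theorem sum_Icc_one_div_mul_sub {m : ℝ} {j : ℕ} (hj : (j : ℝ) < m) :
    ∑ i ∈ Icc 1 j, 1 / ((m - i) * (m - i + 1)) = 1 / (m - j) - 1 / m := by
  induction j with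
  | zero => simp
  | succ j ih =>
    push_cast at hj
    rw [sum_Icc_succ_top (by omega), ih (by linarith)]
    push_cast
    rw [show m - (j + 1) + 1 = m - j by ring]
    have : m - (j + 1) ≠ 0 := by linarith
    have : m - j ≠ 0 := by linarith
    have : m ≠ 0 := by linarith [j.cast_nonneg (α := ℝ)]
    field_simp
    ring

theorem sub_mul_sub_add_one_div_le {m x : ℝ} (h0 : 0 ≤ x) (hx : x < m) :
    (m - x) * (m - x + 1) / (m * (m + 1)) ≤ (1 - x / m) ^ 2 + 1 / m := by
  have hm : 0 < m := by linarith
  rw [div_le_iff₀ (by positivity)]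
  field_simp
  nlinarith [mul_nonneg h0 (sub_nonneg.2 hx.le)]

theorem one_sub_div_sq_sub_le_mul {m x : ℝ} (h0 : 0 ≤ x) (hx : x < m) :
    (1 - x / m) ^ 2 - 4 / m ≤ (m - x) * (m - x + 1) / (m * (m + 1)) * (1 - 4 / (m - x + 1)) := by
  have hm : 0 < m := by linarith
  have hd : 0 < m - x := by linarith
  rw [show (m - x) * (m - x + 1) / (m * (m + 1)) * (1 - 4 / (m - x + 1)) =
      (m - x) * (m - x + 1 - 4) / (m * (m + 1)) by field_simp, le_div_iff₀ (by positivity)]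
  field_simp
  nlinarith [mul_nonneg h0 hd.le, mul_nonneg hm.le hd.le]

theorem sum_Icc_one_eq_sum_range_succ {M : Type*} [AddCommMonoid M] (f : ℕ → M) (n : ℕ) :
    ∑ j ∈ Icc 1 n, f j = ∑ i ∈ range n, f (i + 1) := by
  rw [range_eq_Ico, sum_Ico_add']
  rfl

namespace AntitoneOn

variable {f : ℝ → ℝ} {M : ℕ}

theorem riemannSum_mem_Icc (hf : AntitoneOn f (Set.Icc 0 1)) (hM : 0 < M) :
    1 / (M : ℝ) * ∑ j ∈ Icc 1 M, f (j / M) ∈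
      Set.Icc ((∫ x in (0 : ℝ)..1, f x) - (f 0 - f 1) / M) (∫ x in (0 : ℝ)..1, f x) := by
  have hM' : (0 : ℝ) < M := by exact_mod_cast hM
  have hscaled : AntitoneOn (fun y ↦ f (y / M)) (Set.Icc 0 (0 + M)) := fun a ha b hb hab ↦
    hf ⟨by have := ha.1; positivity, (div_le_one hM').2 (by simpa using ha.2)⟩
      ⟨by have := hb.1; positivity, (div_le_one hM').2 (by simpa using hb.2)⟩
      (by gcongr)
  have hint : ∫ y in (0 : ℝ)..M, f (y / M) = M * ∫ x in (0 : ℝ)..1, f x := by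
    simp [intervalIntegral.integral_comp_div _ hM'.ne', div_self hM'.ne']
  have hupper := hscaled.sum_le_integral
  have hlower := hscaled.integral_le_sum
  simp only [zero_add] at hupper hlower
  rw [hint] at hupper hlower
  have hshift := (sum_range_succ (fun i : ℕ ↦ f (i / M)) M).symm.trans
    (sum_range_succ' (fun i : ℕ ↦ f (i / M)) M)
  simp only [div_self hM'.ne', Nat.cast_zero, zero_div] at hshift
  rw [one_div_mul_eq_div, sum_Icc_one_eq_sum_range_succ (fun j : ℕ ↦ f (j / M))]
  constructor
  · rw [le_div_iff₀ hM', sub_mul, div_mul_cancel₀ _ hM'.ne']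
    linarith
  · rw [div_le_iff₀ hM']
    linarith

theorem tendsto_riemannSum (hf : AntitoneOn f (Set.Icc 0 1)) :
    Tendsto (fun M : ℕ ↦ 1 / (M : ℝ) * ∑ j ∈ Icc 1 M, f (j / M)) atTop
      (𝓝 (∫ x in (0 : ℝ)..1, f x)) := by
  have hlim : Tendsto (fun M : ℕ ↦ (∫ x in (0 : ℝ)..1, f x) - (f 0 - f 1) / M) atTop
      (𝓝 (∫ x in (0 : ℝ)..1, f x)) := by
    simpa using tendsto_const_nhds.sub (tendsto_const_div_atTop_nhds_zero_nat (f 0 - f 1))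
  refine tendsto_of_tendsto_of_tendsto_of_le_of_le' hlim tendsto_const_nhds ?_ ?_ <;>
    filter_upwards [eventually_gt_atTop 0] with M hM
  exacts [(hf.riemannSum_mem_Icc hM).1, (hf.riemannSum_mem_Icc hM).2]

end AntitoneOn

noncomputable def followerProfile (x : ℝ) : ℝ := exp (2 * x) * (1 - x) ^ 2

theorem antitoneOn_exp_mul_one_sub : AntitoneOn (fun x ↦ exp x * (1 - x)) (Set.Ici 0) := by
  intro x hx y _ hxy
  have hE : exp (x - y) ≤ 1 := exp_le_one_iff.2 (by linarith)
  have hE' : x - y + 1 ≤ exp (x - y) := add_one_le_exp _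
  have key : 1 - y ≤ (1 - x) * exp (x - y) := by
    nlinarith [mul_nonneg (Set.mem_Ici.1 hx) (sub_nonneg.2 hE)]
  calc exp y * (1 - y) ≤ exp y * ((1 - x) * exp (x - y)) := by gcongr
    _ = exp x * (1 - x) := by rw [mul_left_comm, ← exp_add]; ring_nf

theorem antitoneOn_followerProfile : AntitoneOn followerProfile (Set.Icc 0 1) := by
  intro x hx y hy hxy
  have hsq : ∀ z, followerProfile z = (exp z * (1 - z)) ^ 2 := fun z ↦ by
    rw [followerProfile, mul_pow, ← exp_nat_mul]; norm_num
  rw [hsq, hsq]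
  exact pow_le_pow_left₀ (mul_nonneg (exp_pos y).le (by linarith [hy.2]))
    (antitoneOn_exp_mul_one_sub hx.1 hy.1 hxy) 2

theorem integral_followerProfile : ∫ x in (0 : ℝ)..1, followerProfile x = (exp 2 - 5) / 4 := by
  have hderiv : ∀ x ∈ Set.uIcc (0 : ℝ) 1,
      HasDerivAt (fun x ↦ exp (2 * x) * (x ^ 2 / 2 - 3 * x / 2 + 5 / 4))
        (followerProfile x) x := by
    intro x _
    have hexp : HasDerivAt (fun x ↦ exp (2 * x)) (exp (2 * x) * 2) x := by
      simpa using ((hasDerivAt_id x).const_mul 2).exp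
    have hsq : HasDerivAt (fun x ↦ x ^ 2) (2 * x) x := by simpa using hasDerivAt_pow 2 x
    have hpoly : HasDerivAt (fun x ↦ x ^ 2 / 2 - 3 * x / 2 + 5 / 4) (x - 3 / 2) x :=
      ((hsq.div_const 2).sub (((hasDerivAt_id x).const_mul 3).div_const 2)).add_const (5 / 4)
        |>.congr_deriv (by ring)
    exact (hexp.mul hpoly).congr_deriv (by rw [followerProfile]; ring)
  have hcont : Continuous followerProfile := by unfold followerProfile; fun_prop
  rw [intervalIntegral.integral_eq_sub_of_hasDerivAt hderiv (hcont.intervalIntegrable _ _)]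
  norm_num
  ring

noncomputable def followerProb (m : ℝ) (j : ℕ) : ℝ :=
  ∏ i ∈ Icc 1 j, (1 - 2 * ((j : ℝ) - i + 1) / ((m - i + 1) * (m - i + 2)))

noncomputable def followerIncrement (m : ℝ) (j i : ℕ) : ℝ :=
  2 * (m - j) / ((m - i) * (m - i + 1))

section FollowerProb

variable {m : ℝ} {j : ℕ}

theorem followerProb_eq_mul_prod (hj : (j : ℝ) < m) :
    followerProb m j = (m - j) * (m - j + 1) / (m * (m + 1)) *
      ∏ i ∈ Icc 1 j, (1 + followerIncrement m j i) := by
  rw [followerProb, ← prod_Icc_sub_div_sub_add_two hj, ← prod_mul_distrib]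
  refine prod_congr rfl fun i hi ↦ ?_
  have hi : (i : ℝ) ≤ j := by exact_mod_cast (mem_Icc.1 hi).2
  have : 0 < m - i := by linarith
  rw [followerIncrement]
  field_simp
  ring

theorem sum_followerIncrement (hj : (j : ℝ) < m) :
    ∑ i ∈ Icc 1 j, followerIncrement m j i = 2 * j / m := by
  have hd : m - j ≠ 0 := by linarith
  have hm : m ≠ 0 := by linarith [j.cast_nonneg (α := ℝ)]
  simp_rw [followerIncrement, div_eq_mul_one_div (2 * (m - j)), ← mul_sum,
    sum_Icc_one_div_mul_sub hj]
  field_simp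
  ring

theorem followerIncrement_mem_Icc (hj : (j : ℝ) < m) {i : ℕ} (hi : i ≤ j) :
    followerIncrement m j i ∈ Set.Icc 0 (2 / (m - j + 1)) := by
  have hi : (i : ℝ) ≤ j := by exact_mod_cast hi
  have hd : 0 < m - j := by linarith
  have hprod : (m - j) * (m - j + 1) ≤ (m - i) * (m - i + 1) := by
    gcongr; linarith
  have hpos : 0 < (m - i) * (m - i + 1) := by nlinarith
  rw [followerIncrement, Set.mem_Icc, div_le_div_iff₀ hpos (by linarith)]
  exact ⟨div_nonneg (by linarith) hpos.le, by nlinarith⟩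

theorem prod_one_add_followerIncrement_le (hj : (j : ℝ) < m) :
    ∏ i ∈ Icc 1 j, (1 + followerIncrement m j i) ≤ exp (2 * j / m) := by
  rw [← sum_followerIncrement hj]
  exact prod_one_add_le_exp_sum_of_nonneg _ fun i hi ↦
    (followerIncrement_mem_Icc hj (mem_Icc.1 hi).2).1

theorem exp_mul_one_sub_le_prod_one_add_followerIncrement (hj : (j : ℝ) < m) :
    exp (2 * j / m) * (1 - 4 / (m - j + 1)) ≤
      ∏ i ∈ Icc 1 j, (1 + followerIncrement m j i) := by
  have hm : 0 < m := by linarith [j.cast_nonneg (α := ℝ)]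
  have hinc := fun i (hi : i ∈ Icc 1 j) ↦ followerIncrement_mem_Icc hj (mem_Icc.1 hi).2
  have hsq : ∑ i ∈ Icc 1 j, followerIncrement m j i ^ 2 ≤ 4 / (m - j + 1) :=
    calc ∑ i ∈ Icc 1 j, followerIncrement m j i ^ 2
        ≤ ∑ i ∈ Icc 1 j, 2 / (m - j + 1) * followerIncrement m j i :=
          sum_le_sum fun i hi ↦ by
            rw [sq]; exact mul_le_mul_of_nonneg_right (hinc i hi).2 (hinc i hi).1
      _ = 2 / (m - j + 1) * (2 * j / m) := by rw [← mul_sum, sum_followerIncrement hj]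
      _ ≤ 2 / (m - j + 1) * 2 := by
          gcongr
          rw [div_le_iff₀ hm]; linarith
      _ = 4 / (m - j + 1) := by ring
  calc exp (2 * j / m) * (1 - 4 / (m - j + 1))
      ≤ exp (2 * j / m) * exp (-(4 / (m - j + 1))) := by
        gcongr; linarith [add_one_le_exp (-(4 / (m - j + 1)))]
    _ ≤ exp (∑ i ∈ Icc 1 j, followerIncrement m j i -
          ∑ i ∈ Icc 1 j, followerIncrement m j i ^ 2) := by
        rw [← exp_add, sum_followerIncrement hj]; gcongr; linarith
    _ ≤ ∏ i ∈ Icc 1 j, (1 + followerIncrement m j i) :=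
        exp_sum_sub_sum_sq_le_prod_one_add _ fun i hi ↦ (hinc i hi).1

theorem followerProb_self (hj : j ≠ 0) : followerProb j j = 0 :=
  prod_eq_zero (mem_Icc.2 ⟨Nat.one_le_iff_ne_zero.2 hj, le_rfl⟩) (by norm_num)

theorem abs_followerProb_sub_followerProfile_le (hm : 0 < m) (hj : (j : ℝ) ≤ m) :
    |followerProb m j - followerProfile (j / m)| ≤ 4 * exp 2 / m := by
  rcases hj.eq_or_lt with hjm | hjm
  · subst hjm
    rw [followerProb_self (by rintro rfl; simp at hm), div_self hm.ne', followerProfile]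
    norm_num; positivity
  have hE : exp (2 * j / m) ≤ exp 2 := exp_le_exp.2 (by rw [div_le_iff₀ hm]; linarith)
  have hΨ := followerProb_eq_mul_prod hjm
  have hj0 : (0 : ℝ) ≤ j := j.cast_nonneg
  rw [followerProfile, ← mul_div_assoc, abs_sub_le_iff, sub_le_iff_le_add', sub_le_comm]
  constructor
  · calc followerProb m j ≤ (m - j) * (m - j + 1) / (m * (m + 1)) * exp (2 * j / m) := by
          rw [hΨ]; gcongr; exact prod_one_add_followerIncrement_le hjm
      _ ≤ ((1 - j / m) ^ 2 + 1 / m) * exp (2 * j / m) := by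
          gcongr; exact sub_mul_sub_add_one_div_le hj0 hjm
      _ = exp (2 * j / m) * (1 - j / m) ^ 2 + exp (2 * j / m) / m := by ring
      _ ≤ exp (2 * j / m) * (1 - j / m) ^ 2 + 4 * exp 2 / m := by gcongr; linarith [exp_pos 2]
  · calc exp (2 * j / m) * (1 - j / m) ^ 2 - 4 * exp 2 / m
        ≤ exp (2 * j / m) * (1 - j / m) ^ 2 - 4 * exp (2 * j / m) / m := by gcongr
      _ = ((1 - j / m) ^ 2 - 4 / m) * exp (2 * j / m) := by ring
      _ ≤ (m - j) * (m - j + 1) / (m * (m + 1)) * (1 - 4 / (m - j + 1)) * exp (2 * j / m) := by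
          gcongr; exact one_sub_div_sq_sub_le_mul hj0 hjm
      _ = (m - j) * (m - j + 1) / (m * (m + 1)) * (exp (2 * j / m) * (1 - 4 / (m - j + 1))) := by
          ring
      _ ≤ followerProb m j := by
          rw [hΨ]; gcongr; exact exp_mul_one_sub_le_prod_one_add_followerIncrement hjm

end FollowerProb

theorem abs_average_followerProb_sub_riemannSum_le {M : ℕ} (hM : 0 < M) :
    |1 / (M : ℝ) * ∑ j ∈ Icc 1 M, followerProb M j -
        1 / (M : ℝ) * ∑ j ∈ Icc 1 M, followerProfile (j / M)| ≤ 4 * exp 2 / M := by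
  have hM' : (0 : ℝ) < M := by exact_mod_cast hM
  rw [← mul_sub, ← sum_sub_distrib, abs_mul, abs_of_pos (by positivity)]
  calc 1 / (M : ℝ) * |∑ j ∈ Icc 1 M, (followerProb M j - followerProfile (j / M))|
      ≤ 1 / (M : ℝ) * ∑ j ∈ Icc 1 M, 4 * exp 2 / M := by
        gcongr
        refine (abs_sum_le_sum_abs _ _).trans (sum_le_sum fun j hj ↦ ?_)
        exact abs_followerProb_sub_followerProfile_le hM' (by exact_mod_cast (mem_Icc.1 hj).2)
    _ = 4 * exp 2 / M := by
        rw [sum_const, Nat.card_Icc, Nat.add_sub_cancel, nsmul_eq_mul]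
        field_simp

/-- Linear-rank model: the asymptotic fraction of followers is `(e² - 5)/4`. -/
theorem stmt19 :
    Filter.Tendsto (fun M : ℕ =>
        (1 / (M : ℝ)) * ∑ j ∈ Finset.Icc 1 M, ∏ i ∈ Finset.Icc 1 j,
          (1 - 2 * ((j : ℝ) - (i : ℝ) + 1) /
            (((M : ℝ) - (i : ℝ) + 1) * ((M : ℝ) - (i : ℝ) + 2))))
      Filter.atTop
      (nhds ((Real.exp 2 - 5) / 4)) := by
  have hriemann := antitoneOn_followerProfile.tendsto_riemannSum
  rw [integral_followerProfile] at hriemann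
  refine hriemann.congr_dist (squeeze_zero' (Eventually.of_forall fun _ ↦ dist_nonneg) ?_
    (tendsto_const_div_atTop_nhds_zero_nat (4 * exp 2)))
  filter_upwards [eventually_gt_atTop 0] with M hM
  rw [dist_comm, Real.dist_eq]
  exact abs_average_followerProb_sub_riemannSum_le hM
end
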